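/- arXiv:2410.13686 — 4 statements merged into one kernel-verified Lean document; each statement's English description precedes it below -/
import Mathlib

section
/- Van der Corput inequality for Hilbert spaces: Let H be a real Hilbert space, N ∈ ℕ, and (φ_n)_{n=1}^N a finite sequence of vectors in H with ‖φ_n‖ ≤ A for all n. Then for every 1 ≤ L ≤ K ≤ N with K + L ≤ N, one has ‖(1/K) ∑_{n=1}^K φ_n‖ ≤ [ (2/K) ∑_{n=1}^K ( (1/L) ∑_{l=0}^{L−1} |⟨φ_n, φ_{n+l}⟩| ) ]^{1/2} + 4A (L/K)^{1/2}. -/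
/-!
Averaging `S = ∑_{n<K} φ n` over the shifts `n ↦ n + l`, `l < L`, moves it by at most `L² A` in
norm, because the `l`-th shift only trades `l` terms at the start for `l` terms at the end. The
averaged sum `T = ∑_{n<K} ∑_{l<L} φ (n + l)` is handled by Cauchy–Schwarz over `n`, and each
`‖∑_{l<L} φ (n + l)‖²` expands into the correlations `⟪φ m, φ (m + d)⟫` with `0 ≤ d < L`, every
pair counted at most twice. Re-indexing `m = n + l` once more costs only boundary terms, each at
most `A²`.
-/

open Finset

theorem sum_Icc_one_eq_sum_range {M : Type*} [AddCommMonoid M] (f : ℕ → M) (K : ℕ) :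
    ∑ n ∈ Icc 1 K, f n = ∑ n ∈ range K, f (n + 1) := by
  rw [range_eq_Ico, sum_Ico_add' f 0 K 1]
  rfl

theorem sum_range_shift_add_sum_range {M : Type*} [AddCommMonoid M] (f : ℕ → M) (K l : ℕ) :
    ∑ n ∈ range K, f (n + l) + ∑ n ∈ range l, f n =
      ∑ n ∈ range K, f n + ∑ n ∈ range l, f (K + n) := by
  rw [← sum_range_add, add_comm, add_comm K, sum_range_add]
  simp only [add_comm l]

theorem sum_range_shift_le {M : Type*} [AddCommMonoid M] [PartialOrder M] [IsOrderedAddMonoid M]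
    {g : ℕ → M} {B : M} {K l : ℕ} (hg : 0 ≤ g) (hB : ∀ n < l, g (K + n) ≤ B) :
    ∑ n ∈ range K, g (n + l) ≤ ∑ n ∈ range K, g n + l • B :=
  calc ∑ n ∈ range K, g (n + l) ≤ ∑ n ∈ range K, g (n + l) + ∑ n ∈ range l, g n :=
        le_add_of_nonneg_right (sum_nonneg fun n _ => hg n)
    _ = ∑ n ∈ range K, g n + ∑ n ∈ range l, g (K + n) := sum_range_shift_add_sum_range g K l
    _ ≤ ∑ n ∈ range K, g n + l • B := by
        grw [sum_le_card_nsmul _ _ B fun n hn => hB n (mem_range.1 hn), card_range]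

theorem norm_sum_range_shift_sub_le {E : Type*} [SeminormedAddCommGroup E] {f : ℕ → E}
    {A : ℝ} {K l : ℕ} (hf : ∀ n < K + l, ‖f n‖ ≤ A) :
    ‖∑ n ∈ range K, f (n + l) - ∑ n ∈ range K, f n‖ ≤ 2 * l * A := by
  have hsum : ∀ g : ℕ → E, (∀ n < l, ‖g n‖ ≤ A) → ‖∑ n ∈ range l, g n‖ ≤ l * A := fun g hg =>
    (norm_sum_le_of_le _ fun n hn => hg n (mem_range.1 hn)).trans_eq (by simp)
  rw [sub_eq_sub_iff_add_eq_add.2 ((sum_range_shift_add_sum_range f K l).trans (add_comm _ _))]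
  calc _ ≤ ‖∑ n ∈ range l, f (K + n)‖ + ‖∑ n ∈ range l, f n‖ := norm_sub_le _ _
    _ ≤ l * A + l * A := add_le_add (hsum _ fun n hn => hf _ (by omega))
        (hsum _ fun n hn => hf _ (by omega))
    _ = 2 * l * A := by ring

theorem sum_range_cast_le_sq_div_two (L : ℕ) : ∑ l ∈ range L, (l : ℝ) ≤ L ^ 2 / 2 := by
  have h : ((∑ l ∈ range L, l : ℕ) : ℝ) * 2 ≤ L * L := by
    exact_mod_cast (sum_range_id_mul_two L).trans_le (Nat.mul_le_mul_left L (Nat.sub_le L 1))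
  push_cast at h
  linarith

theorem sum_range_sum_range_le_two_mul_sum_Ico {a : ℕ → ℕ → ℝ} (hsymm : ∀ i j, a i j = a j i)
    (hdiag : ∀ i, 0 ≤ a i i) (L : ℕ) :
    ∑ i ∈ range L, ∑ j ∈ range L, a i j ≤ 2 * ∑ i ∈ range L, ∑ j ∈ Ico i L, a i j := by
  have hbelow : ∑ i ∈ range L, ∑ j ∈ range i, a i j ≤ ∑ i ∈ range L, ∑ j ∈ Ico i L, a i j := by
    have hswap := sum_Ico_Ico_comm' 0 L fun j i => a i j
    simp only [← range_eq_Ico] at hswap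
    rw [← hswap]
    refine sum_le_sum fun j hj => ?_
    rw [sum_eq_sum_Ico_succ_bot (mem_range.1 hj)]
    simpa only [hsymm j] using le_add_of_nonneg_left (hdiag j)
  calc ∑ i ∈ range L, ∑ j ∈ range L, a i j
      = ∑ i ∈ range L, ∑ j ∈ range i, a i j + ∑ i ∈ range L, ∑ j ∈ Ico i L, a i j := by
        rw [← sum_add_distrib]
        exact sum_congr rfl fun i hi => (sum_range_add_sum_Ico _ (mem_range.1 hi).le).symm
    _ ≤ 2 * ∑ i ∈ range L, ∑ j ∈ Ico i L, a i j := by linarith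

theorem sum_range_sum_range_sum_range_sub_le {c : ℕ → ℕ → ℝ} {B : ℝ} {K L : ℕ}
    (hc : ∀ m d, 0 ≤ c m d) (hB : 0 ≤ B) (hcB : ∀ m d, m + d < K + L → c m d ≤ B) :
    ∑ n ∈ range K, ∑ l ∈ range L, ∑ d ∈ range (L - l), c (n + l) d ≤
      L * ∑ n ∈ range K, ∑ d ∈ range L, c n d + L ^ 3 / 2 * B := by
  have hrow : ∀ l < L, ∑ n ∈ range K, ∑ d ∈ range (L - l), c (n + l) d ≤
      ∑ n ∈ range K, ∑ d ∈ range L, c n d + l * (L * B) := by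
    intro l hl
    -- Truncating at `d < L - l` keeps `m + d < K + L` on the boundary terms `K ≤ m < K + l`.
    have hedge : ∀ n < l, ∑ d ∈ range (L - l), c (K + n) d ≤ L * B := fun n hn => by
      grw [sum_le_card_nsmul (range (L - l)) _ B fun d hd => hcB _ _ (by grind),
        card_range, nsmul_eq_mul, Nat.cast_le.2 (Nat.sub_le L l)]
    calc _ ≤ ∑ n ∈ range K, ∑ d ∈ range (L - l), c n d + l • (L * B) :=
          sum_range_shift_le (fun m => sum_nonneg fun d _ => hc m d) hedge
      _ ≤ _ := by
          rw [nsmul_eq_mul]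
          gcongr with n _
          exacts [fun d _ _ => hc n d, Nat.sub_le L l]
  rw [sum_comm]
  calc _ ≤ ∑ l ∈ range L, (∑ n ∈ range K, ∑ d ∈ range L, c n d + l * (L * B)) :=
        sum_le_sum fun l hl => hrow l (mem_range.1 hl)
    _ = L * ∑ n ∈ range K, ∑ d ∈ range L, c n d + (∑ l ∈ range L, (l : ℝ)) * (L * B) := by
        rw [sum_add_distrib, sum_const, card_range, nsmul_eq_mul, sum_mul]
    _ ≤ L * ∑ n ∈ range K, ∑ d ∈ range L, c n d + L ^ 2 / 2 * (L * B) := by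
        grw [sum_range_cast_le_sq_div_two]
    _ = _ := by ring

theorem le_sqrt_add_of_sq_le_add_sq {t a b : ℝ} (hb : 0 ≤ b) (h : t ^ 2 ≤ a + b ^ 2) :
    t ≤ √a + b := by
  have ha : a ≤ √a ^ 2 := by
    rcases le_total 0 a with ha | ha
    · rw [Real.sq_sqrt ha]
    · nlinarith [Real.sqrt_nonneg a]
  nlinarith [Real.sqrt_nonneg a]

theorem norm_sum_sq_le_card_mul {ι F : Type*} [SeminormedAddCommGroup F] (s : Finset ι)
    (v : ι → F) : ‖∑ i ∈ s, v i‖ ^ 2 ≤ #s * ∑ i ∈ s, ‖v i‖ ^ 2 :=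
  (pow_le_pow_left₀ (norm_nonneg _) (norm_sum_le s v) 2).trans sq_sum_le_card_mul_sum_sq

theorem norm_sum_sum_shift_sub_smul_le {F : Type*} [SeminormedAddCommGroup F] [NormedSpace ℝ F]
    {ψ : ℕ → F} {A : ℝ} {K L : ℕ} (hA : 0 ≤ A) (hψ : ∀ n < K + L, ‖ψ n‖ ≤ A) :
    ‖∑ n ∈ range K, ∑ l ∈ range L, ψ (n + l) - (L : ℝ) • ∑ n ∈ range K, ψ n‖ ≤ L ^ 2 * A :=
  calc _ = ‖∑ l ∈ range L, (∑ n ∈ range K, ψ (n + l) - ∑ n ∈ range K, ψ n)‖ := by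
        rw [sum_sub_distrib, sum_const, card_range, Nat.cast_smul_eq_nsmul, sum_comm]
    _ ≤ ∑ l ∈ range L, 2 * l * A := norm_sum_le_of_le _ fun l hl =>
        norm_sum_range_shift_sub_le fun n hn => hψ n (by grind)
    _ = 2 * A * ∑ l ∈ range L, (l : ℝ) := by
        rw [mul_sum]
        exact sum_congr rfl fun l _ => by ring
    _ ≤ 2 * A * (L ^ 2 / 2) := by grw [sum_range_cast_le_sq_div_two]
    _ = L ^ 2 * A := by ring

section InnerProductSpace

variable {E : Type*} [NormedAddCommGroup E] [InnerProductSpace ℝ E]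

theorem norm_sum_range_sq_le (x : ℕ → E) (L : ℕ) :
    ‖∑ l ∈ range L, x l‖ ^ 2 ≤
      2 * ∑ l ∈ range L, ∑ d ∈ range (L - l), |inner ℝ (x l) (x (l + d))| := by
  rw [← real_inner_self_eq_norm_sq, sum_inner]
  simp only [inner_sum]
  calc _ ≤ 2 * ∑ l ∈ range L, ∑ j ∈ Ico l L, inner ℝ (x l) (x j) :=
        sum_range_sum_range_le_two_mul_sum_Ico (fun i j => real_inner_comm _ _)
          (fun i => real_inner_self_nonneg) L
    _ ≤ _ := by
        simp only [sum_Ico_eq_sum_range]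
        gcongr with l _ d _
        exact le_abs_self _

theorem norm_sum_sum_shift_sq_le {ψ : ℕ → E} {A : ℝ} {K L : ℕ} (hψ : ∀ n < K + L, ‖ψ n‖ ≤ A) :
    ‖∑ n ∈ range K, ∑ l ∈ range L, ψ (n + l)‖ ^ 2 ≤
      K * (2 * (L * ∑ n ∈ range K, ∑ l ∈ range L, |inner ℝ (ψ n) (ψ (n + l))| +
        L ^ 3 / 2 * A ^ 2)) := by
  have hcorr : ∀ m d, m + d < K + L → |inner ℝ (ψ m) (ψ (m + d))| ≤ A ^ 2 := fun m d h =>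
    calc _ ≤ ‖ψ m‖ * ‖ψ (m + d)‖ := abs_real_inner_le_norm _ _
      _ ≤ A * A := mul_le_mul (hψ m (by omega)) (hψ _ h) (norm_nonneg _)
          ((norm_nonneg _).trans (hψ m (by omega)))
      _ = A ^ 2 := (sq A).symm
  calc _ ≤ K * ∑ n ∈ range K, ‖∑ l ∈ range L, ψ (n + l)‖ ^ 2 := by
        simpa only [card_range] using norm_sum_sq_le_card_mul (range K) _
    _ ≤ K * ∑ n ∈ range K, 2 * ∑ l ∈ range L, ∑ d ∈ range (L - l),
          |inner ℝ (ψ (n + l)) (ψ (n + l + d))| := by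
        gcongr with n
        simpa only [add_assoc] using norm_sum_range_sq_le (fun l => ψ (n + l)) L
    _ ≤ _ := by
        rw [← mul_sum]
        exact mul_le_mul_of_nonneg_left (mul_le_mul_of_nonneg_left
          (sum_range_sum_range_sum_range_sub_le (c := fun m d => |inner ℝ (ψ m) (ψ (m + d))|)
            (fun _ _ => abs_nonneg _) (sq_nonneg A) hcorr)
          zero_le_two) K.cast_nonneg

theorem van_der_corput_range (ψ : ℕ → E) {K L : ℕ} {A : ℝ} (hψ : ∀ n < K + L, ‖ψ n‖ ≤ A)
    (hL : 1 ≤ L) (hLK : L ≤ K) :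
    ‖(K : ℝ)⁻¹ • ∑ n ∈ range K, ψ n‖ ≤
      √((2 / K) * ∑ n ∈ range K, ((1 / L) * ∑ l ∈ range L, |inner ℝ (ψ n) (ψ (n + l))|)) +
        2 * A * √(L / K) := by
  have hA : 0 ≤ A := (norm_nonneg _).trans (hψ 0 (by omega))
  have hK : (0 : ℝ) < K := by exact_mod_cast (by omega : 0 < K)
  have hL' : (0 : ℝ) < L := by exact_mod_cast hL
  set S := ∑ n ∈ range K, ψ n
  set T := ∑ n ∈ range K, ∑ l ∈ range L, ψ (n + l)
  set C := ∑ n ∈ range K, ∑ l ∈ range L, |inner ℝ (ψ n) (ψ (n + l))|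
  have hC : (2 / K) * ∑ n ∈ range K, ((1 / L) * ∑ l ∈ range L, |inner ℝ (ψ n) (ψ (n + l))|) =
      2 * C / (K * L) := by
    rw [← mul_sum]
    field_simp
    rfl
  have hshift : ‖(K : ℝ)⁻¹ • S - ((K : ℝ) * L)⁻¹ • T‖ ≤ A * √(L / K) :=
    calc _ = ((K : ℝ) * L)⁻¹ * ‖T - (L : ℝ) • S‖ := by
          rw [← norm_neg, neg_sub, ← norm_smul_of_nonneg (by positivity), smul_sub, smul_smul]
          field_simp
      _ ≤ ((K : ℝ) * L)⁻¹ * (L ^ 2 * A) := by grw [norm_sum_sum_shift_sub_smul_le hA hψ]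
      _ = A * (L / K) := by field_simp
      _ ≤ A * √(L / K) := by
          grw [Real.le_sqrt_self_iff.2 ((div_le_one hK).2 (by exact_mod_cast hLK))]
  have hshifted : ‖((K : ℝ) * L)⁻¹ • T‖ ≤ √(2 * C / (K * L)) + A * √(L / K) := by
    refine le_sqrt_add_of_sq_le_add_sq (by positivity) ?_
    calc _ = ((K : ℝ) * L)⁻¹ ^ 2 * ‖T‖ ^ 2 := by
          rw [norm_smul_of_nonneg (by positivity), mul_pow]
      _ ≤ ((K : ℝ) * L)⁻¹ ^ 2 * (K * (2 * (L * C + L ^ 3 / 2 * A ^ 2))) := by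
          grw [norm_sum_sum_shift_sq_le hψ]
      _ = 2 * C / (K * L) + (A * √(L / K)) ^ 2 := by
          rw [mul_pow, Real.sq_sqrt (by positivity)]
          field_simp
  calc _ ≤ ‖(K : ℝ)⁻¹ • S - ((K : ℝ) * L)⁻¹ • T‖ + ‖((K : ℝ) * L)⁻¹ • T‖ :=
        norm_le_norm_sub_add _ _
    _ ≤ A * √(L / K) + (√(2 * C / (K * L)) + A * √(L / K)) := add_le_add hshift hshifted
    _ = _ := by rw [hC]; ring

end InnerProductSpace

theorem van_der_corput_inequality_general
    {H : Type*} [NormedAddCommGroup H] [InnerProductSpace ℝ H]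
    (N K L : ℕ) (φ : ℕ → H) (A : ℝ)
    (hbound : ∀ n, 1 ≤ n → n ≤ N → ‖φ n‖ ≤ A)
    (hL : 1 ≤ L) (hLK : L ≤ K) (hKL : K + L ≤ N) :
    ‖(K : ℝ)⁻¹ • ∑ n ∈ Finset.Icc 1 K, φ n‖ ≤
      Real.sqrt ((2 / (K : ℝ)) * ∑ n ∈ Finset.Icc 1 K,
        ((1 / (L : ℝ)) * ∑ l ∈ Finset.range L, |(inner ℝ (φ n) (φ (n + l)) : ℝ)|))
      + 4 * A * Real.sqrt ((L : ℝ) / K) := by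
  have hA : 0 ≤ A := (norm_nonneg _).trans (hbound 1 le_rfl (by omega))
  have hvdc := van_der_corput_range (fun n => φ (n + 1)) (K := K) (L := L)
    (fun n hn => hbound (n + 1) (by omega) (by omega)) hL hLK
  rw [sum_Icc_one_eq_sum_range, sum_Icc_one_eq_sum_range]
  simp only [add_right_comm _ 1]
  grw [hvdc]
  gcongr
  norm_num

/-- Van der Corput inequality for sequences of vectors in a real Hilbert space. -/
theorem van_der_corput_inequality
    {H : Type*} [NormedAddCommGroup H] [InnerProductSpace ℝ H]
    (N K L : ℕ) (φ : ℕ → H) (A : ℝ) (hA : 0 < A)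
    (hbound : ∀ n, 1 ≤ n → n ≤ N → ‖φ n‖ ≤ A)
    (hL : 1 ≤ L) (hLK : L ≤ K) (hKN : K ≤ N) (hKL : K + L ≤ N) :
    ‖(K : ℝ)⁻¹ • ∑ n ∈ Finset.Icc 1 K, φ n‖ ≤
      Real.sqrt ((2 / (K : ℝ)) * ∑ n ∈ Finset.Icc 1 K,
        ((1 / (L : ℝ)) * ∑ l ∈ Finset.range L, |(inner ℝ (φ n) (φ (n + l)) : ℝ)|))
      + 4 * A * Real.sqrt ((L : ℝ) / K) :=
  van_der_corput_inequality_general N K L φ A hbound hL hLK hKL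
end

section
/- Shearing commutation for time-changed flows (derivative formula): Let M be a smooth manifold with smooth vector fields Y and V generating flows (h^Y_s) and (f_t), and suppose [V, Y] = −ℓ V for a smooth function ℓ : M → ℝ. Then for every φ ∈ C¹(M), x ∈ M, t ∈ ℝ, Y(φ ∘ f_t)(x) = (Yφ)∘f_t(x) + (∫₀^t ℓ∘f_r(x) dr) · (Vφ)∘f_t(x). -/
open MeasureTheory intervalIntegral

section ShearingAux

set_option maxHeartbeats 1000000

open Set Metric Real Filter Topology

variable {E : Type*} [NormedAddCommGroup E] [NormedSpace ℝ E]

/-- local bound for a continuous function -/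
private lemma loc_bound {F : Type*} [NormedAddCommGroup F] (g : E → F) (hg : Continuous g)
    (x₀ : E) : ∃ ρ > (0:ℝ), ∀ z ∈ closedBall x₀ ρ, ‖g z‖ ≤ ‖g x₀‖ + 1 := by
  obtain ⟨ρ, hρ, h⟩ := Metric.continuousAt_iff.1 hg.continuousAt 1 one_pos
  refine ⟨ρ/2, by linarith, fun z hz => ?_⟩
  have : dist (g z) (g x₀) < 1 := h (lt_of_le_of_lt (mem_closedBall.1 hz) (by linarith))
  calc ‖g z‖ ≤ ‖g x₀‖ + ‖g z - g x₀‖ := norm_le_insert' _ _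
  _ ≤ ‖g x₀‖ + 1 := by rw [← dist_eq_norm]; linarith

theorem flow_fderiv_deriv_zero_right (V : E → E) (hV : ContDiff ℝ (⊤ : ℕ∞) V)
    (f : ℝ → E → E) (hf0 : ∀ x, f 0 x = x)
    (hfflow : ∀ x t, HasDerivAt (fun τ => f τ x) (V (f t x)) t)
    (hfsmooth : ∀ t, ContDiff ℝ (⊤ : ℕ∞) (f t)) (x₀ : E) (w : E) :
    HasDerivWithinAt (fun s => fderiv ℝ (f s) x₀ w) (fderiv ℝ V x₀ w) (Ici 0) 0 := by
  have hcont : ∀ z : E, Continuous fun τ => f τ z :=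
    fun z => continuous_iff_continuousAt.2 fun τ => (hfflow z τ).continuousAt
  have hVd : Differentiable ℝ V := hV.differentiable (by simp)
  have hDVc : Continuous (fderiv ℝ V) := hV.continuous_fderiv (by simp)
  have hDV2 : ContDiff ℝ (⊤ : ℕ∞) (fderiv ℝ V) := hV.fderiv_right (by simp)
  have hfd : ∀ t, Differentiable ℝ (f t) := fun t => (hfsmooth t).differentiable (by simp)
  -- local bounds around x₀
  obtain ⟨ρ₁, hρ₁, hbV⟩ := loc_bound V hV.continuous x₀
  obtain ⟨ρ₂, hρ₂, hbDV⟩ := loc_bound (fderiv ℝ V) hDVc x₀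
  obtain ⟨ρ₃, hρ₃, hbD2V⟩ := loc_bound (fderiv ℝ (fderiv ℝ V)) (hDV2.continuous_fderiv (by simp)) x₀
  set M := ‖V x₀‖ + 1 with hMdef
  set Cv := ‖fderiv ℝ V x₀‖ + 1 with hCvdef
  set C₂ := ‖fderiv ℝ (fderiv ℝ V) x₀‖ + 1 with hC₂def
  have hM0 : 0 < M := by positivity
  have hCv0 : 0 < Cv := by positivity
  have hC₂0 : 0 < C₂ := by positivity
  set ρ := min ρ₁ (min ρ₂ ρ₃) with hρdef
  have hρ0 : 0 < ρ := lt_min hρ₁ (lt_min hρ₂ hρ₃)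
  set B : Set E := closedBall x₀ ρ with hBdef
  have hM : ∀ z ∈ B, ‖V z‖ ≤ M := fun z hz =>
    hbV z (closedBall_subset_closedBall (min_le_left _ _) hz)
  have hCv : ∀ z ∈ B, ‖fderiv ℝ V z‖ ≤ Cv := fun z hz =>
    hbDV z (closedBall_subset_closedBall ((min_le_right _ _).trans (min_le_left _ _)) hz)
  have hC₂ : ∀ z ∈ B, ‖fderiv ℝ (fderiv ℝ V) z‖ ≤ C₂ := fun z hz =>
    hbD2V z (closedBall_subset_closedBall ((min_le_right _ _).trans (min_le_right _ _)) hz)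
  -- Lipschitz bounds on B (convex)
  have lipV : ∀ a ∈ B, ∀ b ∈ B, ‖V b - V a‖ ≤ Cv * ‖b - a‖ := fun a ha b hb =>
    (convex_closedBall _ _).norm_image_sub_le_of_norm_fderiv_le
      (fun z _ => hVd z) hCv ha hb
  have lipDV : ∀ a ∈ B, ∀ b ∈ B, ‖fderiv ℝ V b - fderiv ℝ V a‖ ≤ C₂ * ‖b - a‖ :=
    fun a ha b hb => (convex_closedBall _ _).norm_image_sub_le_of_norm_fderiv_le
      (fun z _ => hDV2.differentiable (by simp) z) hC₂ ha hb
  -- small time horizon and small ball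
  set T₀ := min 1 (ρ / (4 * M)) with hT₀def
  have hT₀pos : 0 < T₀ := lt_min one_pos (by positivity)
  have hT₀1 : T₀ ≤ 1 := min_le_left _ _
  have hMT₀ : M * T₀ ≤ ρ/4 := by
    have h1 : T₀ ≤ ρ / (4 * M) := min_le_right _ _
    rw [le_div_iff₀ (by positivity)] at h1
    nlinarith
  set δ := ρ/4 with hδdef
  have hδpos : 0 < δ := by positivity
  have hδB : closedBall x₀ δ ⊆ B :=
    closedBall_subset_closedBall (by rw [hδdef]; linarith)
  -- escape: trajectories starting in the small ball stay near x₀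
  have escape : ∀ z ∈ closedBall x₀ δ, ∀ r ∈ Icc (0:ℝ) T₀,
      f r z ∈ closedBall x₀ (ρ/2) := by
    intro z hz
    have hzB : ‖z - x₀‖ ≤ δ := by rw [← dist_eq_norm]; exact hz
    -- time-MVT bound valid as long as the trajectory is in B up to time r
    have key : ∀ r ∈ Icc (0:ℝ) T₀, (∀ r' ∈ Icc (0:ℝ) r, f r' z ∈ B) →
        ∀ r' ∈ Icc (0:ℝ) r, f r' z ∈ closedBall x₀ (ρ/2) := by
      intro r hr hmem r' hr'
      have hMVT := norm_image_sub_le_of_norm_deriv_le_segment'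
        (f := fun τ => f τ z) (f' := fun τ => V (f τ z)) (a := 0) (b := r') (C := M)
        (fun τ hτ => (hfflow z τ).hasDerivWithinAt)
        (fun τ hτ => hM _ (hmem τ ⟨hτ.1, hτ.2.le.trans hr'.2⟩))
        r' ⟨hr'.1, le_rfl⟩
      simp only [hf0, sub_zero] at hMVT
      rw [mem_closedBall, dist_eq_norm]
      have hr'T : r' ≤ T₀ := hr'.2.trans hr.2
      calc ‖f r' z - x₀‖ ≤ ‖f r' z - z‖ + ‖z - x₀‖ := norm_sub_le_norm_sub_add_norm_sub _ _ _
      _ ≤ M * r' + δ := add_le_add hMVT hzB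
      _ ≤ ρ/2 := by nlinarith [hM0.le, hr'.1]
    have hsub : Icc (0:ℝ) T₀ ⊆ {r | ∀ r' ∈ Icc (0:ℝ) r, f r' z ∈ closedBall x₀ (3*ρ/4)} := by
      apply IsClosed.Icc_subset_of_forall_exists_gt
      · apply IsSeqClosed.isClosed
        intro u r hu hur
        refine ⟨?_, isClosed_Icc.isSeqClosed (fun n => (hu n).2) hur⟩
        intro r' hr'
        rcases eq_or_lt_of_le hr'.2 with h | h
        · subst h
          have hQ : IsClosed {τ : ℝ | f τ z ∈ closedBall x₀ (3*ρ/4)} :=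
            Metric.isClosed_closedBall.preimage (hcont z)
          exact hQ.isSeqClosed (fun n => (hu n).1 _ ⟨(hu n).2.1, le_rfl⟩) hur
        · obtain ⟨n, hn⟩ := (hur.eventually (eventually_gt_nhds h)).exists
          exact (hu n).1 _ ⟨hr'.1, hn.le⟩
      · intro r' hr'
        have : r' = 0 := le_antisymm hr'.2 hr'.1
        subst this
        rw [hf0]
        exact closedBall_subset_closedBall (by rw [hδdef]; linarith) hz
      · rintro r ⟨hrS, hrI⟩ y hy
        -- at time r the trajectory is within ρ/2; extend by continuity
        have hhalf : f r z ∈ closedBall x₀ (ρ/2) := by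
          refine key r ⟨hrI.1, hrI.2.le⟩ (fun r' h' => ?_) r ⟨hrI.1, le_rfl⟩
          exact closedBall_subset_closedBall (by linarith) (hrS _ h')
        obtain ⟨η, hη, hηc⟩ := Metric.continuousAt_iff.1 ((hcont z).continuousAt (x := r))
          (ρ/4) (by positivity)
        set y' := min T₀ (min y (r + η/2)) with hy'def
        have hry' : r < y' := lt_min hrI.2 (lt_min hy (by linarith))
        refine ⟨y', ⟨?_, ⟨hry', (min_le_right _ _).trans (min_le_left _ _)⟩⟩⟩
        intro r' hr'
        rcases le_or_gt r' r with h | h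
        · exact hrS _ ⟨hr'.1, h⟩
        · have hd : dist r' r < η := by
            have h1 : r' ≤ r + η/2 := hr'.2.trans ((min_le_right _ _).trans (min_le_right _ _))
            rw [Real.dist_eq, abs_of_pos (by linarith)]
            linarith
          have h1 := hηc hd
          have h2 : dist (f r z) x₀ ≤ ρ/2 := mem_closedBall.1 hhalf
          rw [mem_closedBall]
          calc dist (f r' z) x₀ ≤ dist (f r' z) (f r z) + dist (f r z) x₀ := dist_triangle _ _ _
          _ ≤ 3*ρ/4 := by linarith [le_of_lt h1]
    intro r hr
    exact key r hr (fun r' h' => closedBall_subset_closedBall (by linarith)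
      (hsub hr _ h')) r ⟨hr.1, le_rfl⟩
  -- time Lipschitz
  have htime : ∀ y ∈ closedBall x₀ δ, ∀ r ∈ Icc (0:ℝ) T₀, ‖f r y - y‖ ≤ M * r := by
    intro y hy r hr
    have hMVT := norm_image_sub_le_of_norm_deriv_le_segment'
      (f := fun τ => f τ y) (f' := fun τ => V (f τ y)) (a := 0) (b := r) (C := M)
      (fun τ hτ => (hfflow y τ).hasDerivWithinAt)
      (fun τ hτ => hM _ (closedBall_subset_closedBall (by linarith)
        (escape y hy τ ⟨hτ.1, hτ.2.le.trans hr.2⟩)))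
      r ⟨hr.1, le_rfl⟩
    simpa only [hf0, sub_zero] using hMVT
  -- space Lipschitz for the flow via Grönwall
  have hCv0' : (0:ℝ) ≤ Cv := hCv0.le
  have flowlip : ∀ r ∈ Icc (0:ℝ) T₀, ∀ z₁ ∈ closedBall x₀ δ, ∀ z₂ ∈ closedBall x₀ δ,
      dist (f r z₁) (f r z₂) ≤ dist z₁ z₂ * exp Cv := by
    have hlipV : LipschitzOnWith ⟨Cv, hCv0'⟩ V B := by
      apply LipschitzOnWith.of_dist_le_mul
      intro a ha b hb
      rw [dist_eq_norm, dist_eq_norm]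
      exact lipV b hb a ha
    intro r hr z₁ h₁ z₂ h₂
    have hgr := dist_le_of_trajectories_ODE_of_mem
      (v := fun _ => V) (s := fun _ => B) (K := ⟨Cv, hCv0'⟩)
      (fun _ _ => hlipV)
      ((hcont z₁).continuousOn)
      (fun τ _ => (hfflow z₁ τ).hasDerivWithinAt)
      (fun τ hτ => closedBall_subset_closedBall (by linarith)
        (escape z₁ h₁ τ ⟨hτ.1, hτ.2.le.trans hr.2⟩))
      ((hcont z₂).continuousOn)
      (fun τ _ => (hfflow z₂ τ).hasDerivWithinAt)
      (fun τ hτ => closedBall_subset_closedBall (by linarith)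
        (escape z₂ h₂ τ ⟨hτ.1, hτ.2.le.trans hr.2⟩))
      (by simp [hf0] : dist (f 0 z₁) (f 0 z₂) ≤ dist z₁ z₂)
    have h3 := hgr r ⟨hr.1, le_rfl⟩
    simp only [sub_zero] at h3
    refine h3.trans ?_
    have h4 : exp (Cv * r) ≤ exp Cv := exp_le_exp.2 (by nlinarith [hr.1, hr.2, hT₀1])
    have hd : (0:ℝ) ≤ dist z₁ z₂ := dist_nonneg
    calc dist z₁ z₂ * exp (((⟨Cv, hCv0'⟩ : NNReal) : ℝ) * r) = dist z₁ z₂ * exp (Cv * r) := rfl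
    _ ≤ dist z₁ z₂ * exp Cv := by nlinarith
  -- operator norm bound for the space derivative of the flow
  have hDfb : ∀ r ∈ Icc (0:ℝ) T₀, ∀ y ∈ ball x₀ δ, ‖fderiv ℝ (f r) y‖ ≤ exp Cv := by
    intro r hr y hy
    have hlip : LipschitzOnWith (exp Cv).toNNReal (f r) (closedBall x₀ δ) := by
      apply LipschitzOnWith.of_dist_le_mul
      intro a ha b hb
      rw [Real.coe_toNNReal _ (exp_nonneg _), mul_comm]
      exact flowlip r hr a ha b hb
    have := norm_fderiv_le_of_lipschitzOn ℝ
      (Filter.mem_of_superset (isOpen_ball.mem_nhds hy) ball_subset_closedBall) hlip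
    rwa [Real.coe_toNNReal _ (exp_nonneg _)] at this
  -- master estimate
  have ME : ∀ s ∈ Icc (0:ℝ) T₀, ∀ z ∈ ball x₀ δ, ∀ w' : E, ∀ β : ℝ, 0 ≤ β →
      (∀ r ∈ Icc (0:ℝ) s, ∀ y ∈ ball x₀ δ,
        ‖fderiv ℝ (f r) y - ContinuousLinearMap.id ℝ E‖ ≤ β) →
      ‖fderiv ℝ (f s) z w' - w' - s • fderiv ℝ V z w'‖
        ≤ (C₂ * M * s * exp Cv + Cv * β) * (s * ‖w'‖) := by
    intro s hs z hz w' β hβ0 hβ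
    have hs0 : (0:ℝ) ≤ s := hs.1
    set Θ := C₂ * M * s * exp Cv + Cv * β with hΘdef
    have hΘ0 : 0 ≤ Θ := add_nonneg
      (mul_nonneg (mul_nonneg (mul_nonneg hC₂0.le hM0.le) hs0) (exp_nonneg _))
      (mul_nonneg hCv0' hβ0)
    -- bound on the derivative of u ↦ V (f r u) - V u
    have hHd : ∀ r ∈ Icc (0:ℝ) s, ∀ y ∈ ball x₀ δ,
        ‖fderiv ℝ (fun u => V (f r u) - V u) y‖ ≤ Θ := by
      intro r hr y hy
      have hrT : r ∈ Icc (0:ℝ) T₀ := ⟨hr.1, hr.2.trans hs.2⟩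
      have hyB : y ∈ closedBall x₀ δ := ball_subset_closedBall hy
      have hfryB : f r y ∈ B := closedBall_subset_closedBall (by linarith)
        (escape y hyB r hrT)
      have hyB' : y ∈ B := hδB hyB
      have hd1 : DifferentiableAt ℝ (fun u => V (f r u)) y := (hVd _).comp y (hfd r y)
      have heq : fderiv ℝ (fun u => V (f r u) - V u) y
          = ((fderiv ℝ V (f r y)).comp (fderiv ℝ (f r) y)) - fderiv ℝ V y := by
        rw [fderiv_fun_sub hd1 (hVd y)]
        congr 1
        exact fderiv_comp y (hVd _) (hfd r y)
      have hsplit : ((fderiv ℝ V (f r y)).comp (fderiv ℝ (f r) y)) - fderiv ℝ V y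
          = ((fderiv ℝ V (f r y) - fderiv ℝ V y).comp (fderiv ℝ (f r) y))
            + (fderiv ℝ V y).comp (fderiv ℝ (f r) y - ContinuousLinearMap.id ℝ E) := by
        ext u
        simp only [ContinuousLinearMap.sub_apply, ContinuousLinearMap.add_apply,
          ContinuousLinearMap.comp_apply, map_sub, ContinuousLinearMap.id_apply]
        abel
      rw [heq, hsplit]
      have h1 : ‖(fderiv ℝ V (f r y) - fderiv ℝ V y).comp (fderiv ℝ (f r) y)‖
          ≤ C₂ * M * s * exp Cv := by
        refine (ContinuousLinearMap.opNorm_comp_le _ _).trans ?_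
        have ha := lipDV y hyB' (f r y) hfryB
        have hb : ‖f r y - y‖ ≤ M * s := (htime y hyB r hrT).trans
          (by nlinarith [hM0.le, hr.2])
        have hc := hDfb r hrT y hy
        have h0 : (0:ℝ) ≤ ‖fderiv ℝ (f r) y‖ := norm_nonneg _
        have ha' : ‖fderiv ℝ V (f r y) - fderiv ℝ V y‖ ≤ C₂ * (M * s) := by nlinarith
        calc ‖fderiv ℝ V (f r y) - fderiv ℝ V y‖ * ‖fderiv ℝ (f r) y‖
            ≤ (C₂ * (M * s)) * exp Cv := mul_le_mul ha' hc h0 (by positivity)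
        _ = C₂ * M * s * exp Cv := by ring
      have h2 : ‖(fderiv ℝ V y).comp (fderiv ℝ (f r) y - ContinuousLinearMap.id ℝ E)‖
          ≤ Cv * β := by
        refine (ContinuousLinearMap.opNorm_comp_le _ _).trans ?_
        have hd := hβ r hr y hy
        have he := hCv y hyB'
        exact mul_le_mul he hd (norm_nonneg _) hCv0'
      refine (norm_add_le _ _).trans ?_
      rw [hΘdef]
      linarith
    -- estimate for a fixed small ε > 0
    have key : ∀ ε : ℝ, 0 < ε → z + ε • w' ∈ ball x₀ δ →
        ‖f s (z + ε • w') - f s z - ε • w' - s • (V (z + ε • w') - V z)‖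
          ≤ Θ * (ε * ‖w'‖) * s := by
      intro ε hε hz₁
      set z₁ := z + ε • w' with hz₁def
      have hder : ∀ τ : ℝ, HasDerivAt
          (fun τ => f τ z₁ - f τ z - ε • w' - τ • (V z₁ - V z))
          (V (f τ z₁) - V (f τ z) - (V z₁ - V z)) τ := by
        intro τ
        have h1 := ((hfflow z₁ τ).sub (hfflow z τ)).sub_const (ε • w')
        have h2 : HasDerivAt (fun τ : ℝ => τ • (V z₁ - V z)) (V z₁ - V z) τ := by
          simpa using (hasDerivAt_id τ).smul_const (V z₁ - V z)
        exact h1.sub h2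
      have hbd : ∀ τ ∈ Ico (0:ℝ) s, ‖V (f τ z₁) - V (f τ z) - (V z₁ - V z)‖
          ≤ Θ * (ε * ‖w'‖) := by
        intro τ hτ
        have hτs : τ ∈ Icc (0:ℝ) s := ⟨hτ.1, hτ.2.le⟩
        have hmvt := (convex_ball x₀ δ).norm_image_sub_le_of_norm_fderiv_le
          (f := fun u => V (f τ u) - V u)
          (fun y hy => ((hVd _).comp y (hfd τ y)).sub (hVd y))
          (fun y hy => hHd τ hτs y hy) hz hz₁
        have hzz : ‖z₁ - z‖ = ε * ‖w'‖ := by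
          rw [hz₁def]
          simp [norm_smul, abs_of_pos hε]
        have heq2 : V (f τ z₁) - V z₁ - (V (f τ z) - V z)
            = V (f τ z₁) - V (f τ z) - (V z₁ - V z) := by abel
        rw [heq2, hzz] at hmvt
        exact hmvt
      have hMVT2 := norm_image_sub_le_of_norm_deriv_le_segment'
        (f := fun τ => f τ z₁ - f τ z - ε • w' - τ • (V z₁ - V z))
        (f' := fun τ => V (f τ z₁) - V (f τ z) - (V z₁ - V z)) (a := 0) (b := s)
        (C := Θ * (ε * ‖w'‖))
        (fun τ _ => (hder τ).hasDerivWithinAt) hbd s ⟨hs.1, le_rfl⟩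
      have hzero : z₁ - z - ε • w' = 0 := by rw [hz₁def, add_sub_cancel_left, sub_self]
      simp only [hf0, zero_smul, sub_zero, hzero, sub_zero] at hMVT2
      simpa using hMVT2
    -- pass to the limit ε → 0⁺
    have hmem : ∀ᶠ ε in 𝓝[>] (0:ℝ), z + ε • w' ∈ ball x₀ δ := by
      have hcont2 : Continuous fun ε : ℝ => z + ε • w' :=
        continuous_const.add (continuous_id.smul continuous_const)
      have h0 : (fun ε : ℝ => z + ε • w') 0 ∈ ball x₀ δ := by simpa using hz
      exact eventually_nhdsWithin_of_eventually_nhds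
        (hcont2.continuousAt.preimage_mem_nhds (isOpen_ball.mem_nhds h0))
    have hline : HasDerivAt (fun ε : ℝ => z + ε • w') w' 0 := by
      simpa using ((hasDerivAt_id (0:ℝ)).smul_const w').const_add z
    have hsl1 : Tendsto (fun ε : ℝ => ε⁻¹ • (f s (z + ε • w') - f s z)) (𝓝[≠] 0)
        (𝓝 (fderiv ℝ (f s) z w')) := by
      have hcomp : HasDerivAt (fun ε : ℝ => f s (z + ε • w')) (fderiv ℝ (f s) z w') 0 := by
        have h := (hfd s (z + (0:ℝ) • w')).hasFDerivAt.comp_hasDerivAt 0 hline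
        simpa [Function.comp_def] using h
      have h := hasDerivAt_iff_tendsto_slope_zero.1 hcomp
      simpa using h
    have hsl2 : Tendsto (fun ε : ℝ => ε⁻¹ • (V (z + ε • w') - V z)) (𝓝[≠] 0)
        (𝓝 (fderiv ℝ V z w')) := by
      have hcomp : HasDerivAt (fun ε : ℝ => V (z + ε • w')) (fderiv ℝ V z w') 0 := by
        have h := (hVd (z + (0:ℝ) • w')).hasFDerivAt.comp_hasDerivAt 0 hline
        simpa [Function.comp_def] using h
      have h := hasDerivAt_iff_tendsto_slope_zero.1 hcomp
      simpa using h
    have hcomb : Tendsto (fun ε : ℝ =>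
        ε⁻¹ • (f s (z + ε • w') - f s z) - w' - s • (ε⁻¹ • (V (z + ε • w') - V z)))
        (𝓝[>] 0) (𝓝 (fderiv ℝ (f s) z w' - w' - s • fderiv ℝ V z w')) := by
      refine Tendsto.mono_left ?_ (nhdsWithin_mono 0 fun x hx => (show (0:ℝ) < x from hx).ne')
      exact (hsl1.sub tendsto_const_nhds).sub (hsl2.const_smul s)
    have hbnd : ∀ᶠ ε in 𝓝[>] (0:ℝ),
        ‖ε⁻¹ • (f s (z + ε • w') - f s z) - w' - s • (ε⁻¹ • (V (z + ε • w') - V z))‖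
          ≤ Θ * ‖w'‖ * s := by
      filter_upwards [hmem, self_mem_nhdsWithin] with ε hε₁ hε₂
      have hε : (0:ℝ) < ε := hε₂
      have hrw : ε⁻¹ • (f s (z + ε • w') - f s z) - w' - s • (ε⁻¹ • (V (z + ε • w') - V z))
          = ε⁻¹ • (f s (z + ε • w') - f s z - ε • w' - s • (V (z + ε • w') - V z)) := by
        match_scalars <;> field_simp
      rw [hrw, norm_smul, norm_inv, Real.norm_eq_abs, abs_of_pos hε]
      have hk := key ε hε hε₁
      calc ε⁻¹ * ‖f s (z + ε • w') - f s z - ε • w' - s • (V (z + ε • w') - V z)‖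
          ≤ ε⁻¹ * (Θ * (ε * ‖w'‖) * s) := by
            exact mul_le_mul_of_nonneg_left hk (by positivity)
      _ = Θ * ‖w'‖ * s := by field_simp
    have hfinal := le_of_tendsto hcomb.norm
      (hbnd.mono fun ε h => h)
    calc ‖fderiv ℝ (f s) z w' - w' - s • fderiv ℝ V z w'‖ ≤ Θ * ‖w'‖ * s := hfinal
    _ = Θ * (s * ‖w'‖) := by ring
  -- crude uniform bound (stage 1)
  have hβ₀ : ∀ r ∈ Icc (0:ℝ) T₀, ∀ y ∈ ball x₀ δ,
      ‖fderiv ℝ (f r) y - ContinuousLinearMap.id ℝ E‖ ≤ exp Cv + 1 := by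
    intro r hr y hy
    calc ‖fderiv ℝ (f r) y - ContinuousLinearMap.id ℝ E‖
        ≤ ‖fderiv ℝ (f r) y‖ + ‖(ContinuousLinearMap.id ℝ E : E →L[ℝ] E)‖ := norm_sub_le _ _
    _ ≤ exp Cv + 1 := add_le_add (hDfb r hr y hy) ContinuousLinearMap.norm_id_le
  set C₁ := Cv + (C₂ * M * exp Cv + Cv * (exp Cv + 1)) with hC₁def
  have hC₁0 : 0 ≤ C₁ := by positivity
  -- linear bound (stage 2)
  have stage2 : ∀ s ∈ Icc (0:ℝ) T₀, ∀ y ∈ ball x₀ δ,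
      ‖fderiv ℝ (f s) y - ContinuousLinearMap.id ℝ E‖ ≤ C₁ * s := by
    intro s hs y hy
    have hs1 : s ≤ 1 := hs.2.trans hT₀1
    refine ContinuousLinearMap.opNorm_le_bound _ (mul_nonneg hC₁0 hs.1) fun w' => ?_
    have hme := ME s hs y hy w' (exp Cv + 1) (by positivity)
      (fun r hr y' hy' => hβ₀ r ⟨hr.1, hr.2.trans hs.2⟩ y' hy')
    have hDVy : ‖fderiv ℝ V y w'‖ ≤ Cv * ‖w'‖ :=
      le_trans (ContinuousLinearMap.le_opNorm _ _)
        (mul_le_mul_of_nonneg_right (hCv y (hδB (ball_subset_closedBall hy))) (norm_nonneg _))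
    have hex : (fderiv ℝ (f s) y - ContinuousLinearMap.id ℝ E) w'
        = (fderiv ℝ (f s) y w' - w' - s • fderiv ℝ V y w') + s • fderiv ℝ V y w' := by
      simp only [ContinuousLinearMap.sub_apply, ContinuousLinearMap.id_apply]
      abel
    rw [hex]
    have hsm : ‖s • fderiv ℝ V y w'‖ ≤ s * (Cv * ‖w'‖) := by
      rw [norm_smul, Real.norm_of_nonneg hs.1]
      exact mul_le_mul_of_nonneg_left hDVy hs.1
    refine (norm_add_le _ _).trans ?_
    have hw0 : (0:ℝ) ≤ ‖w'‖ := norm_nonneg _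
    have hslack : 0 ≤ C₂ * M * exp Cv * ((1 - s) * (s * ‖w'‖)) :=
      mul_nonneg (mul_nonneg (mul_nonneg hC₂0.le hM0.le) (exp_nonneg Cv))
        (mul_nonneg (sub_nonneg.2 hs1) (mul_nonneg hs.1 hw0))
    rw [hC₁def]
    nlinarith [hme, hsm]
  -- quadratic bound (stage 3)
  have stage3 : ∀ s ∈ Icc (0:ℝ) T₀,
      ‖fderiv ℝ (f s) x₀ w - w - s • fderiv ℝ V x₀ w‖
        ≤ (C₂ * M * exp Cv + Cv * C₁) * s^2 * ‖w‖ := by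
    intro s hs
    have hme := ME s hs x₀ (mem_ball_self hδpos) w (C₁ * s) (mul_nonneg hC₁0 hs.1)
      (fun r hr y hy => (stage2 r ⟨hr.1, hr.2.trans hs.2⟩ y hy).trans
        (mul_le_mul_of_nonneg_left hr.2 hC₁0))
    refine hme.trans (le_of_eq ?_)
    ring
  -- conclusion
  have hDf0 : fderiv ℝ (f 0) x₀ = ContinuousLinearMap.id ℝ E := by
    have hid : f 0 = fun z => z := funext hf0
    rw [hid, fderiv_id']
  rw [hasDerivWithinAt_iff_isLittleO]
  refine Asymptotics.isLittleO_iff.mpr ?_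
  intro c hc
  set C₃ := C₂ * M * exp Cv + Cv * C₁ with hC₃def
  have hC₃0 : 0 ≤ C₃ := by positivity
  have hη0 : 0 < min T₀ (c / (C₃ * ‖w‖ + 1)) := lt_min hT₀pos (by positivity)
  filter_upwards [Icc_mem_nhdsGE_of_mem (Set.mem_Ico.mpr ⟨le_rfl, hη0⟩)] with s hs
  have hsT : s ∈ Icc (0:ℝ) T₀ := ⟨hs.1, hs.2.trans (min_le_left _ _)⟩
  have h3 := stage3 s hsT
  simp only [hDf0, ContinuousLinearMap.id_apply, sub_zero]
  rw [Real.norm_of_nonneg hs.1]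
  have hηc : s * (C₃ * ‖w‖ + 1) ≤ c := by
    have h4 : s ≤ c / (C₃ * ‖w‖ + 1) := hs.2.trans (min_le_right _ _)
    rw [le_div_iff₀ (by positivity)] at h4
    linarith
  have h6 : C₃ * s^2 * ‖w‖ ≤ c * s := by
    nlinarith [sq_nonneg s, hs.1, mul_nonneg hC₃0 (norm_nonneg w)]
  linarith

theorem flow_fderiv_deriv_zero (V : E → E) (hV : ContDiff ℝ (⊤ : ℕ∞) V)
    (f : ℝ → E → E) (hf0 : ∀ x, f 0 x = x)
    (hfflow : ∀ x t, HasDerivAt (fun τ => f τ x) (V (f t x)) t)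
    (hfsmooth : ∀ t, ContDiff ℝ (⊤ : ℕ∞) (f t)) (x₀ : E) (w : E) :
    HasDerivAt (fun s => fderiv ℝ (f s) x₀ w) (fderiv ℝ V x₀ w) 0 := by
  have h₁ := flow_fderiv_deriv_zero_right V hV f hf0 hfflow hfsmooth x₀ w
  have hrev := flow_fderiv_deriv_zero_right (fun z => -V z) hV.neg (fun r => f (-r))
    (fun x => by simpa using hf0 x)
    (by
      intro x t
      have hneg : HasDerivAt (fun τ : ℝ => -τ) (-1 : ℝ) t := (hasDerivAt_id t).neg
      have h := HasDerivAt.scomp t (hfflow x (-t)) hneg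
      simpa [Function.comp_def] using h)
    (fun t => hfsmooth (-t)) x₀ w
  rw [fderiv_fun_neg] at hrev
  have h₂ : HasDerivWithinAt (fun s => fderiv ℝ (f s) x₀ w) (fderiv ℝ V x₀ w) (Iic 0) 0 := by
    have hneg : HasDerivWithinAt (fun u : ℝ => -u) (-1 : ℝ) (Iic 0) 0 :=
      ((hasDerivAt_id (0:ℝ)).neg).hasDerivWithinAt
    have hmaps : MapsTo (fun u : ℝ => -u) (Iic (0:ℝ)) (Ici (0:ℝ)) :=
      fun u hu => show (0:ℝ) ≤ -u from neg_nonneg.2 (show u ≤ 0 from hu)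
    have hrev0 : HasDerivWithinAt (fun s => fderiv ℝ (f (-s)) x₀ w)
        (-(fderiv ℝ V x₀) w) (Ici 0) (-(0:ℝ)) := by
      simpa using hrev
    have h := HasDerivWithinAt.scomp (0:ℝ) hrev0 hneg hmaps
    simp only [Function.comp_def, neg_neg] at h
    have heq : ((-1 : ℝ) • (-(fderiv ℝ V x₀) w)) = fderiv ℝ V x₀ w := by
      simp
    rw [heq] at h
    exact h
  have h := h₂.union h₁
  rw [Iic_union_Ici] at h
  exact hasDerivWithinAt_univ.mp h

theorem flow_fderiv_hasDerivAt (V : E → E) (hV : ContDiff ℝ (⊤ : ℕ∞) V)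
    (f : ℝ → E → E) (hf0 : ∀ x, f 0 x = x)
    (hfflow : ∀ x t, HasDerivAt (fun τ => f τ x) (V (f t x)) t)
    (hfgrp : ∀ s t, f (s + t) = f s ∘ f t)
    (hfsmooth : ∀ t, ContDiff ℝ (⊤ : ℕ∞) (f t)) (x : E) (w : E) (t : ℝ) :
    HasDerivAt (fun τ => fderiv ℝ (f τ) x w)
      (fderiv ℝ V (f t x) (fderiv ℝ (f t) x w)) t := by
  have hq := flow_fderiv_deriv_zero V hV f hf0 hfflow hfsmooth (f t x) (fderiv ℝ (f t) x w)
  have hA : ∀ τ : ℝ, fderiv ℝ (f τ) x w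
      = fderiv ℝ (f (τ - t)) (f t x) (fderiv ℝ (f t) x w) := by
    intro τ
    have hcomp : f τ = f (τ - t) ∘ f t := by
      rw [← hfgrp]; congr 1; ring
    conv_lhs => rw [hcomp]
    rw [fderiv_comp x ((hfsmooth _).differentiable (by simp) _)
      ((hfsmooth t).differentiable (by simp) x)]
    rfl
  have hfun : (fun τ => fderiv ℝ (f τ) x w)
      = fun τ => fderiv ℝ (f (τ - t)) (f t x) (fderiv ℝ (f t) x w) := funext hA
  rw [hfun]
  have hq' : HasDerivAt (fun s => fderiv ℝ (f s) (f t x) (fderiv ℝ (f t) x w))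
      (fderiv ℝ V (f t x) (fderiv ℝ (f t) x w)) (t - t) := by
    rw [sub_self]; exact hq
  have hin : HasDerivAt (fun τ : ℝ => τ - t) 1 t := (hasDerivAt_id t).sub_const t
  have h := HasDerivAt.scomp (h := fun τ => τ - t) t hq' hin
  simpa [Function.comp_def] using h

theorem linear_ODE_unique (W : ℝ → E →L[ℝ] E) (hW : Continuous W)
    (A c : ℝ → E) (hA : ∀ τ, HasDerivAt A (W τ (A τ)) τ)
    (hc : ∀ τ, HasDerivAt c (W τ (c τ)) τ) (h0 : A 0 = c 0) (t : ℝ) : A t = c t := by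
  set a : ℝ := -(|t|+1) with hadef
  set b : ℝ := |t|+1 with hbdef
  have hab : a < b := by
    have := abs_nonneg t
    rw [hadef, hbdef]; linarith
  obtain ⟨C, hC⟩ := (isCompact_Icc (a := a) (b := b)).exists_bound_of_continuousOn
    hW.continuousOn
  have hC0 : 0 ≤ C := le_trans (norm_nonneg _) (hC a ⟨le_rfl, hab.le⟩)
  set v : ℝ → E → E := fun τ z => W (max a (min b τ)) z with hvdef
  have hv : ∀ τ, LipschitzWith C.toNNReal (v τ) := by
    intro τ
    apply LipschitzWith.of_dist_le_mul
    intro z₁ z₂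
    have hmem : max a (min b τ) ∈ Icc a b :=
      ⟨le_max_left _ _, max_le hab.le (min_le_left _ _)⟩
    have h1 : dist (v τ z₁) (v τ z₂) ≤ ‖W (max a (min b τ))‖ * dist z₁ z₂ := by
      rw [dist_eq_norm, dist_eq_norm, hvdef, ← map_sub]
      exact ContinuousLinearMap.le_opNorm _ _
    have h2 : (C.toNNReal : ℝ) = C := Real.coe_toNNReal _ hC0
    rw [h2]
    exact h1.trans (mul_le_mul_of_nonneg_right (hC _ hmem) dist_nonneg)
  have hclamp : ∀ τ ∈ Icc a b, ∀ z, v τ z = W τ z := by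
    intro τ hτ z
    rw [hvdef]
    simp only [min_eq_right hτ.2, max_eq_right hτ.1]
  have h0mem : (0:ℝ) ∈ Ioo a b := by
    have := abs_nonneg t
    constructor
    · rw [hadef]; linarith
    · rw [hbdef]; linarith
  have heq := ODE_solution_unique_of_mem_Icc (v := v) (s := fun _ => (univ : Set E))
    (K := C.toNNReal) (fun τ _ => (hv τ).lipschitzOnWith) h0mem
    (fun τ _ => (hA τ).continuousAt.continuousWithinAt)
    (fun τ hτ => by rw [hclamp τ (Ioo_subset_Icc_self hτ)]; exact hA τ)
    (fun _ _ => mem_univ _)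
    (fun τ _ => (hc τ).continuousAt.continuousWithinAt)
    (fun τ hτ => by rw [hclamp τ (Ioo_subset_Icc_self hτ)]; exact hc τ)
    (fun _ _ => mem_univ _) h0
  exact heq ⟨by rw [hadef]; linarith [neg_abs_le t], by rw [hbdef]; linarith [le_abs_self t]⟩

end ShearingAux

/-- Shearing commutation for time-changed flows: if `[V, Y] = -ℓ V`, then the
derivative of `φ ∘ f_t` along `Y` picks up a shear term along `V` with coefficient
`∫₀ᵗ ℓ ∘ f_r dr`. -/
theorem shearing_derivative_formula
    {E : Type*} [NormedAddCommGroup E] [NormedSpace ℝ E]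
    (V Y : E → E) (ℓ : E → ℝ)
    (hV : ContDiff ℝ (⊤ : ℕ∞) V) (hY : ContDiff ℝ (⊤ : ℕ∞) Y) (hℓ : ContDiff ℝ (⊤ : ℕ∞) ℓ)
    (hbracket : ∀ x, fderiv ℝ Y x (V x) - fderiv ℝ V x (Y x) = -(ℓ x) • V x)
    (f : ℝ → E → E) (hf0 : ∀ x, f 0 x = x)
    (hfflow : ∀ x t, HasDerivAt (fun τ => f τ x) (V (f t x)) t)
    (hfgrp : ∀ s t, f (s + t) = f s ∘ f t)
    (hfsmooth : ∀ t, ContDiff ℝ (⊤ : ℕ∞) (f t))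
    (φ : E → ℝ) (hφ : ContDiff ℝ 1 φ) (x : E) (t : ℝ) :
    fderiv ℝ (φ ∘ f t) x (Y x) =
      fderiv ℝ φ (f t x) (Y (f t x)) +
        (∫ r in (0:ℝ)..t, ℓ (f r x)) * fderiv ℝ φ (f t x) (V (f t x)) := by
  have hcont : ∀ z : E, Continuous fun τ => f τ z :=
    fun z => continuous_iff_continuousAt.2 fun τ => (hfflow z τ).continuousAt
  set W : ℝ → E →L[ℝ] E := fun τ => fderiv ℝ V (f τ x) with hWdef
  have hWc : Continuous W := (hV.continuous_fderiv (by simp)).comp (hcont x)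
  set A : ℝ → E := fun τ => fderiv ℝ (f τ) x (Y x) with hAdef
  set c : ℝ → E := fun τ => Y (f τ x) + (∫ r in (0:ℝ)..τ, ℓ (f r x)) • V (f τ x) with hcdef
  have hA : ∀ τ, HasDerivAt A (W τ (A τ)) τ := fun τ =>
    flow_fderiv_hasDerivAt V hV f hf0 hfflow hfgrp hfsmooth x (Y x) τ
  have hc' : ∀ τ, HasDerivAt c (W τ (c τ)) τ := by
    intro τ
    have h1 : HasDerivAt (fun τ => Y (f τ x)) (fderiv ℝ Y (f τ x) (V (f τ x))) τ :=
      (hY.differentiable (by simp) _).hasFDerivAt.comp_hasDerivAt τ (hfflow x τ)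
    have h2 : HasDerivAt (fun τ => ∫ r in (0:ℝ)..τ, ℓ (f r x)) (ℓ (f τ x)) τ :=
      (Continuous.integral_hasStrictDerivAt (hℓ.continuous.comp (hcont x)) 0 τ).hasDerivAt
    have h3 : HasDerivAt (fun τ => V (f τ x)) (fderiv ℝ V (f τ x) (V (f τ x))) τ :=
      (hV.differentiable (by simp) _).hasFDerivAt.comp_hasDerivAt τ (hfflow x τ)
    have h4 := h1.add (h2.smul h3)
    have hbr : fderiv ℝ Y (f τ x) (V (f τ x))
        = fderiv ℝ V (f τ x) (Y (f τ x)) - ℓ (f τ x) • V (f τ x) := by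
      have hb := hbracket (f τ x)
      rw [neg_smul] at hb
      rw [sub_eq_iff_eq_add] at hb
      rw [hb]
      abel
    have h5 : fderiv ℝ Y (f τ x) (V (f τ x))
        + ((∫ r in (0:ℝ)..τ, ℓ (f r x)) • fderiv ℝ V (f τ x) (V (f τ x))
          + ℓ (f τ x) • V (f τ x)) = W τ (c τ) := by
      rw [hbr, hWdef, hcdef]
      simp only [map_add, _root_.map_smul]
      abel
    exact h5 ▸ h4
  have hA0 : A 0 = c 0 := by
    rw [hAdef, hcdef]
    have hid : f 0 = fun z => z := funext hf0
    simp [hid, fderiv_id', intervalIntegral.integral_same, hf0]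
  have hkey := linear_ODE_unique W hWc A c hA hc' hA0 t
  have hfdiff : DifferentiableAt ℝ (f t) x := (hfsmooth t).differentiable (by simp) x
  have hφdiff : DifferentiableAt ℝ φ (f t x) := hφ.differentiable one_ne_zero _
  have hchain : fderiv ℝ (φ ∘ f t) x = (fderiv ℝ φ (f t x)).comp (fderiv ℝ (f t) x) :=
    fderiv_comp x hφdiff hfdiff
  rw [hchain]
  have hstep : (fderiv ℝ φ (f t x)).comp (fderiv ℝ (f t) x) (Y x)
      = fderiv ℝ φ (f t x) (A t) := rfl
  rw [hstep, hkey, hcdef]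
  simp only [map_add, _root_.map_smul, smul_eq_mul]
end

section
/- Quantitative bound on shearing: Assume ℓ, Yℓ (derivative along Y), and Vℓ are uniformly bounded on M, in the setting of flows (h^Y_s), (f_t) with [V,Y] = −ℓV, and let z(x,s,t) be the shearing function satisfying f_t ∘ h^Y_s(x) = h^Y_s ∘ f_{z(x,s,t)}(x). Then there exists C_ℓ ≥ 1 such that for all t ≥ 0 and s ∈ [0,1]: |z(x, s, t) − t| ≤ C_ℓ s t, and |z(x,s,t) − t − s·∫₀^t ℓ∘f_r(x) dr| ≤ C_ℓ s t (s + s² t). -/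
set_option maxHeartbeats 1000000

open MeasureTheory intervalIntegral

private lemma abs_intervalIntegral_le {φ : ℝ → ℝ} {C a b : ℝ}
    (hb : ∀ x ∈ Set.uIoc a b, |φ x| ≤ C) :
    |∫ x in a..b, φ x| ≤ C * |b - a| := by
  simpa [Real.norm_eq_abs] using
    intervalIntegral.norm_integral_le_of_norm_le_const (f := φ) (C := C)
      (by simpa [Real.norm_eq_abs] using hb)

private lemma lip_of_hasDerivAt {φ φ' : ℝ → ℝ} {M : ℝ}
    (hd : ∀ u, HasDerivAt φ (φ' u) u) (hc : Continuous φ')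
    (hb : ∀ u, |φ' u| ≤ M) (a b : ℝ) : |φ b - φ a| ≤ M * |b - a| := by
  have h1 : ∫ u in a..b, φ' u = φ b - φ a :=
    intervalIntegral.integral_eq_sub_of_hasDerivAt (fun u _ => hd u)
      (hc.intervalIntegrable a b)
  rw [← h1]
  exact abs_intervalIntegral_le (fun x hx => hb x)

private lemma abs_exp_sub_one_le3 (a : ℝ) : |Real.exp a - 1| ≤ |a| * Real.exp |a| := by
  rcases le_or_gt 0 a with ha | ha
  · rw [abs_of_nonneg ha,
      abs_of_nonneg (by nlinarith [Real.one_le_exp ha] : (0:ℝ) ≤ Real.exp a - 1)]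
    have h2 : Real.exp (-a) * Real.exp a = 1 := by rw [← Real.exp_add]; simp
    nlinarith [Real.add_one_le_exp (-a), Real.exp_pos a]
  · rw [abs_of_neg ha,
      abs_of_nonpos (by nlinarith [Real.exp_le_one_iff.2 ha.le] : Real.exp a - 1 ≤ 0)]
    have h1 := Real.add_one_le_exp a
    have h2 : (1:ℝ) ≤ Real.exp (-a) := Real.one_le_exp (by linarith)
    nlinarith

/-- Quantitative shearing bounds: if `ℓ` and its derivatives along `Y` and `V` are
uniformly bounded, then `|z(x,s,t) - t| ≤ C_ℓ s t` and
`|z(x,s,t) - t - s ∫₀ᵗ ℓ∘f_r(x) dr| ≤ C_ℓ s t (s + s² t)` for `t ≥ 0`, `s ∈ [0,1]`. -/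
theorem quantitative_shearing_bounds
    {E : Type*} [NormedAddCommGroup E] [NormedSpace ℝ E]
    (V Y : E → E) (ℓ : E → ℝ)
    (hV : ContDiff ℝ (⊤ : ℕ∞) V) (hY : ContDiff ℝ (⊤ : ℕ∞) Y) (hℓ : ContDiff ℝ (⊤ : ℕ∞) ℓ)
    (hbracket : ∀ x, fderiv ℝ Y x (V x) - fderiv ℝ V x (Y x) = -(ℓ x) • V x)
    (Bℓ BY BV : ℝ)
    (hbl : ∀ x, |ℓ x| ≤ Bℓ)
    (hbY : ∀ x, |fderiv ℝ ℓ x (Y x)| ≤ BY)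
    (hbV : ∀ x, |fderiv ℝ ℓ x (V x)| ≤ BV)
    (f : ℝ → E → E) (hf0 : ∀ x, f 0 x = x)
    (hfflow : ∀ x t, HasDerivAt (fun τ => f τ x) (V (f t x)) t)
    (hfgrp : ∀ s t, f (s + t) = f s ∘ f t)
    (h : ℝ → E → E) (hh0 : ∀ x, h 0 x = x)
    (hhflow : ∀ x s, HasDerivAt (fun σ => h σ x) (Y (h s x)) s)
    (hhgrp : ∀ s s', h (s + s') = h s ∘ h s')
    (z : E → ℝ → ℝ → ℝ)
    (hzsmooth : ∀ x t, ContDiff ℝ (⊤ : ℕ∞) (fun s => z x s t))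
    (hcomm : ∀ x s t, f t (h s x) = h s (f (z x s t) x))
    (hz0 : ∀ x t, z x 0 t = t)
    (hzderiv : ∀ x s t, HasDerivAt (fun σ => z x σ t)
      (Real.exp (-∫ r in (0:ℝ)..(-s), ℓ (h r (f t (h s x)))) *
        ∫ r in (0:ℝ)..t, ℓ (f r (h s x))) s) :
    ∃ Cℓ : ℝ, 1 ≤ Cℓ ∧ ∀ (x : E) (t s : ℝ), 0 ≤ t → s ∈ Set.Icc (0:ℝ) 1 →
      |z x s t - t| ≤ Cℓ * s * t ∧
      |z x s t - t - s * ∫ r in (0:ℝ)..t, ℓ (f r x)| ≤ Cℓ * s * t * (s + s ^ 2 * t) := by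
  -- nonnegativity of the bounds
  have hBl : 0 ≤ Bℓ := le_trans (abs_nonneg _) (hbl 0)
  have hBY : 0 ≤ BY := le_trans (abs_nonneg _) (hbY 0)
  have hBV : 0 ≤ BV := le_trans (abs_nonneg _) (hbV 0)
  have hexp1 : (1:ℝ) ≤ Real.exp Bℓ := Real.one_le_exp hBl
  -- constants
  set C₁ : ℝ := Real.exp Bℓ * Bℓ with hC₁def
  have hC₁ : 0 ≤ C₁ := by positivity
  set K₁ : ℝ := Real.exp Bℓ * Bℓ ^ 2 + BY with hK₁def
  have hK₁ : 0 ≤ K₁ := by positivity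
  set C₄ : ℝ := BY + 2 * Bℓ ^ 2 with hC₄def
  have hC₄ : 0 ≤ C₄ := by positivity
  set C₆ : ℝ := Real.exp Bℓ * Bℓ ^ 2 + C₄ with hC₆def
  have hC₆ : 0 ≤ C₆ := by positivity
  -- continuity of flows in time
  have hfc : ∀ y : E, Continuous fun r => f r y :=
    fun y => continuous_iff_continuousAt.2 fun u => (hfflow y u).continuousAt
  have hhc : ∀ y : E, Continuous fun τ => h τ y :=
    fun y => continuous_iff_continuousAt.2 fun u => (hhflow y u).continuousAt
  -- continuity of the derivative functionals
  have hVLc : Continuous fun p => fderiv ℝ ℓ p (V p) :=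
    (hℓ.continuous_fderiv (by simp)).clm_apply hV.continuous
  have hYLc : Continuous fun p => fderiv ℝ ℓ p (Y p) :=
    (hℓ.continuous_fderiv (by simp)).clm_apply hY.continuous
  -- continuity of ℓ along f-orbits
  have hgc : ∀ y : E, Continuous fun r => ℓ (f r y) :=
    fun y => hℓ.continuous.comp (hfc y)
  -- derivative of ℓ along f-orbits
  have hgd : ∀ (y : E) (r : ℝ),
      HasDerivAt (fun u => ℓ (f u y)) (fderiv ℝ ℓ (f r y) (V (f r y))) r := by
    intro y r
    exact ((hℓ.differentiable (by simp) (f r y)).hasFDerivAt).comp_hasDerivAt r (hfflow y r)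
  -- derivative of ℓ along h-orbits
  have hld : ∀ (w : E) (τ : ℝ),
      HasDerivAt (fun τ' => ℓ (h τ' w)) (fderiv ℝ ℓ (h τ w) (Y (h τ w))) τ := by
    intro w τ
    exact ((hℓ.differentiable (by simp) (h τ w)).hasFDerivAt).comp_hasDerivAt τ (hhflow w τ)
  -- Lipschitz of ℓ along f-orbits
  have hlipf : ∀ (y : E) (a b : ℝ), |ℓ (f b y) - ℓ (f a y)| ≤ BV * |b - a| := by
    intro y a b
    exact lip_of_hasDerivAt (hgd y) (hVLc.comp (hfc y)) (fun u => hbV (f u y)) a b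
  -- Lipschitz of ℓ along h-orbits
  have hliph : ∀ (w : E) (δ : ℝ), |ℓ (h δ w) - ℓ w| ≤ BY * |δ| := by
    intro w δ
    have := lip_of_hasDerivAt (hld w) (hYLc.comp (hhc w)) (fun u => hbY (h u w)) 0 δ
    simpa [hh0 w] using this
  -- bound on ∫₀^r ℓ(f u y)
  have hGb : ∀ (y : E) (r : ℝ), 0 ≤ r → |∫ u in (0:ℝ)..r, ℓ (f u y)| ≤ Bℓ * r := by
    intro y r hr
    have := abs_intervalIntegral_le (φ := fun u => ℓ (f u y)) (C := Bℓ) (a := 0) (b := r)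
      (fun u _ => hbl _)
    simpa [abs_of_nonneg hr] using this
  -- FTC-1 for G y
  have hGd : ∀ (y : E) (r : ℝ),
      HasDerivAt (fun ρ => ∫ u in (0:ℝ)..ρ, ℓ (f u y)) (ℓ (f r y)) r :=
    fun y r => ((hgc y).integral_hasStrictDerivAt 0 r).hasDerivAt
  have hGc : ∀ y : E, Continuous fun ρ => ∫ u in (0:ℝ)..ρ, ℓ (f u y) :=
    fun y => continuous_iff_continuousAt.2 fun ρ => (hGd y ρ).continuousAt
  have hGlip : ∀ (y : E) (a b : ℝ),
      |(∫ u in (0:ℝ)..b, ℓ (f u y)) - ∫ u in (0:ℝ)..a, ℓ (f u y)| ≤ Bℓ * |b - a| :=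
    fun y a b => lip_of_hasDerivAt (hGd y) (hgc y) (fun u => hbl _) a b
  -- continuity of the z-derivative integrand
  have hΨc : ∀ (y : E) (t : ℝ), Continuous fun σ =>
      Real.exp (-∫ r in (0:ℝ)..(-σ), ℓ (h r (f t (h σ y)))) *
        ∫ r in (0:ℝ)..t, ℓ (f r (h σ y)) := by
    intro y t
    have he : (fun σ => Real.exp (-∫ r in (0:ℝ)..(-σ), ℓ (h r (f t (h σ y)))) *
        ∫ r in (0:ℝ)..t, ℓ (f r (h σ y))) = deriv (fun σ => z y σ t) :=
      funext fun σ => ((hzderiv y σ t).deriv).symm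
    rw [he]
    exact (hzsmooth y t).continuous_deriv (by simp)
  -- FTC for z
  have hzFTC : ∀ (y : E) (s t : ℝ),
      (∫ σ in (0:ℝ)..s, Real.exp (-∫ r in (0:ℝ)..(-σ), ℓ (h r (f t (h σ y)))) *
        ∫ r in (0:ℝ)..t, ℓ (f r (h σ y))) = z y s t - t := by
    intro y s t
    have := intervalIntegral.integral_eq_sub_of_hasDerivAt
      (f := fun σ => z y σ t) (fun σ _ => hzderiv y σ t) ((hΨc y t).intervalIntegrable 0 s)
    rw [this]
    simp [hz0]
  -- bound on the exponential factor
  have hEb : ∀ (p : E) (σ : ℝ), 0 ≤ σ → σ ≤ 1 →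
      Real.exp (-∫ r in (0:ℝ)..(-σ), ℓ (h r p)) ≤ Real.exp Bℓ := by
    intro p σ h0 h1
    apply Real.exp_le_exp.2
    have hI : |∫ r in (0:ℝ)..(-σ), ℓ (h r p)| ≤ Bℓ * σ := by
      have := abs_intervalIntegral_le (φ := fun r => ℓ (h r p)) (C := Bℓ) (a := 0) (b := -σ)
        (fun u _ => hbl _)
      simpa [abs_of_nonneg h0] using this
    have := neg_abs_le (∫ r in (0:ℝ)..(-σ), ℓ (h r p))
    nlinarith [abs_nonneg (∫ r in (0:ℝ)..(-σ), ℓ (h r p))]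
  have hEdiff : ∀ (p : E) (σ : ℝ), 0 ≤ σ → σ ≤ 1 →
      |Real.exp (-∫ r in (0:ℝ)..(-σ), ℓ (h r p)) - 1| ≤ Real.exp Bℓ * Bℓ * σ := by
    intro p σ h0 h1
    have hI : |∫ r in (0:ℝ)..(-σ), ℓ (h r p)| ≤ Bℓ * σ := by
      have := abs_intervalIntegral_le (φ := fun r => ℓ (h r p)) (C := Bℓ) (a := 0) (b := -σ)
        (fun u _ => hbl _)
      simpa [abs_of_nonneg h0] using this
    have h2 := abs_exp_sub_one_le3 (-∫ r in (0:ℝ)..(-σ), ℓ (h r p))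
    have h3 : |(-∫ r in (0:ℝ)..(-σ), ℓ (h r p))| ≤ Bℓ * σ := by rwa [abs_neg]
    have h4 : Real.exp |(-∫ r in (0:ℝ)..(-σ), ℓ (h r p))| ≤ Real.exp Bℓ :=
      Real.exp_le_exp.2 (by nlinarith)
    calc |Real.exp (-∫ r in (0:ℝ)..(-σ), ℓ (h r p)) - 1|
        ≤ |(-∫ r in (0:ℝ)..(-σ), ℓ (h r p))| *
            Real.exp |(-∫ r in (0:ℝ)..(-σ), ℓ (h r p))| := h2
      _ ≤ (Bℓ * σ) * Real.exp Bℓ := by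
          apply mul_le_mul h3 h4 (le_of_lt (Real.exp_pos _)) (by nlinarith)
      _ = Real.exp Bℓ * Bℓ * σ := by ring
  -- Lemma A : first-order bound on z, any base point
  have hA : ∀ (y : E) (s r : ℝ), 0 ≤ s → s ≤ 1 → 0 ≤ r →
      |z y s r - r| ≤ C₁ * s * r := by
    intro y s r hs0 hs1 hr
    rw [← hzFTC y s r]
    have hb : ∀ σ ∈ Set.uIoc (0:ℝ) s,
        |Real.exp (-∫ u in (0:ℝ)..(-σ), ℓ (h u (f r (h σ y)))) *
          ∫ u in (0:ℝ)..r, ℓ (f u (h σ y))| ≤ C₁ * r := by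
      intro σ hσ
      rw [Set.uIoc_of_le hs0] at hσ
      rw [abs_mul, abs_of_nonneg (le_of_lt (Real.exp_pos _))]
      have h1 := hEb (f r (h σ y)) σ hσ.1.le (le_trans hσ.2 hs1)
      have h2 := hGb (h σ y) r hr
      calc Real.exp (-∫ u in (0:ℝ)..(-σ), ℓ (h u (f r (h σ y)))) *
            |∫ u in (0:ℝ)..r, ℓ (f u (h σ y))|
          ≤ Real.exp Bℓ * (Bℓ * r) := by
            exact mul_le_mul h1 h2 (abs_nonneg _) (by positivity)
      _ = C₁ * r := by rw [hC₁def]; ring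
    have := abs_intervalIntegral_le hb
    calc |∫ σ in (0:ℝ)..s, Real.exp (-∫ u in (0:ℝ)..(-σ), ℓ (h u (f r (h σ y)))) *
          ∫ u in (0:ℝ)..r, ℓ (f u (h σ y))| ≤ C₁ * r * |s - 0| := this
      _ = C₁ * s * r := by rw [abs_of_nonneg (by simpa using hs0)]; ring
  -- Lemma B : comparison of ℓ along shifted orbits
  have hB : ∀ (y : E) (τ u : ℝ), 0 ≤ τ → τ ≤ 1 → 0 ≤ u →
      |ℓ (f u (h τ y)) - ℓ (f u y)| ≤ BY * τ + BV * (C₁ * τ * u) := by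
    intro y τ u h0 h1 hu
    rw [hcomm y τ u]
    have e1 : ℓ (h τ (f (z y τ u) y)) - ℓ (f u y)
        = (ℓ (h τ (f (z y τ u) y)) - ℓ (f (z y τ u) y))
          + (ℓ (f (z y τ u) y) - ℓ (f u y)) := by ring
    rw [e1]
    refine le_trans (abs_add_le _ _) (add_le_add ?_ ?_)
    · simpa [abs_of_nonneg h0] using hliph (f (z y τ u) y) τ
    · calc |ℓ (f (z y τ u) y) - ℓ (f u y)| ≤ BV * |z y τ u - u| := hlipf y u (z y τ u)
        _ ≤ BV * (C₁ * τ * u) := mul_le_mul_of_nonneg_left (hA y τ u h0 h1 hu) hBV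
  -- integrated version
  have hJd : ∀ (y : E) (τ r : ℝ), 0 ≤ τ → τ ≤ 1 → 0 ≤ r →
      |(∫ u in (0:ℝ)..r, ℓ (f u (h τ y))) - ∫ u in (0:ℝ)..r, ℓ (f u y)|
        ≤ (BY * τ + BV * (C₁ * τ * r)) * r := by
    intro y τ r h0 h1 hr
    rw [← intervalIntegral.integral_sub ((hgc (h τ y)).intervalIntegrable 0 r)
      ((hgc y).intervalIntegrable 0 r)]
    have hb : ∀ u ∈ Set.uIoc (0:ℝ) r, |ℓ (f u (h τ y)) - ℓ (f u y)|
        ≤ BY * τ + BV * (C₁ * τ * r) := by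
      intro u hu
      rw [Set.uIoc_of_le hr] at hu
      refine le_trans (hB y τ u h0 h1 hu.1.le) ?_
      have h2 : C₁ * τ * u ≤ C₁ * τ * r := by nlinarith [hu.2, mul_nonneg hC₁ h0]
      nlinarith
    have := abs_intervalIntegral_le hb
    simpa [abs_of_nonneg hr] using this
  -- second-order expansion of z
  have hz2 : ∀ (y : E) (δ r : ℝ), 0 ≤ δ → δ ≤ 1 → 0 ≤ r →
      |z y δ r - r - δ * ∫ u in (0:ℝ)..r, ℓ (f u y)|
        ≤ δ ^ 2 * (r * (K₁ + BV * C₁ * r)) := by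
    intro y δ r h0 h1 hr
    have e2 : δ * ∫ u in (0:ℝ)..r, ℓ (f u y)
        = ∫ σ in (0:ℝ)..δ, (∫ u in (0:ℝ)..r, ℓ (f u y)) := by
      rw [intervalIntegral.integral_const]
      simp [smul_eq_mul]
    rw [← hzFTC y δ r, e2, ← intervalIntegral.integral_sub
      ((hΨc y r).intervalIntegrable 0 δ) intervalIntegrable_const]
    have hb : ∀ σ ∈ Set.uIoc (0:ℝ) δ,
        |Real.exp (-∫ u in (0:ℝ)..(-σ), ℓ (h u (f r (h σ y)))) *
          (∫ u in (0:ℝ)..r, ℓ (f u (h σ y))) - ∫ u in (0:ℝ)..r, ℓ (f u y)|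
          ≤ δ * (r * (K₁ + BV * C₁ * r)) := by
      intro σ hσ
      rw [Set.uIoc_of_le h0] at hσ
      obtain ⟨hσ0, hσδ⟩ := hσ
      have hσ1 : σ ≤ 1 := le_trans hσδ h1
      have h4 : |Real.exp (-∫ u in (0:ℝ)..(-σ), ℓ (h u (f r (h σ y)))) - 1|
          ≤ Real.exp Bℓ * Bℓ * σ := hEdiff _ σ hσ0.le hσ1
      have h5 : |∫ u in (0:ℝ)..r, ℓ (f u (h σ y))| ≤ Bℓ * r := hGb (h σ y) r hr
      have h6 : |(∫ u in (0:ℝ)..r, ℓ (f u (h σ y))) - ∫ u in (0:ℝ)..r, ℓ (f u y)|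
          ≤ (BY * σ + BV * (C₁ * σ * r)) * r := hJd y σ r hσ0.le hσ1 hr
      have e3 : Real.exp (-∫ u in (0:ℝ)..(-σ), ℓ (h u (f r (h σ y)))) *
          (∫ u in (0:ℝ)..r, ℓ (f u (h σ y))) - ∫ u in (0:ℝ)..r, ℓ (f u y)
          = (Real.exp (-∫ u in (0:ℝ)..(-σ), ℓ (h u (f r (h σ y)))) - 1) *
              (∫ u in (0:ℝ)..r, ℓ (f u (h σ y)))
            + ((∫ u in (0:ℝ)..r, ℓ (f u (h σ y))) - ∫ u in (0:ℝ)..r, ℓ (f u y)) := by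
        ring
      rw [e3]
      calc |(Real.exp (-∫ u in (0:ℝ)..(-σ), ℓ (h u (f r (h σ y)))) - 1) *
              (∫ u in (0:ℝ)..r, ℓ (f u (h σ y)))
            + ((∫ u in (0:ℝ)..r, ℓ (f u (h σ y))) - ∫ u in (0:ℝ)..r, ℓ (f u y))|
          ≤ |Real.exp (-∫ u in (0:ℝ)..(-σ), ℓ (h u (f r (h σ y)))) - 1| *
              |∫ u in (0:ℝ)..r, ℓ (f u (h σ y))|
            + |(∫ u in (0:ℝ)..r, ℓ (f u (h σ y))) - ∫ u in (0:ℝ)..r, ℓ (f u y)| := by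
            refine le_trans (abs_add_le _ _) ?_
            rw [abs_mul]
        _ ≤ (Real.exp Bℓ * Bℓ * σ) * (Bℓ * r) + (BY * σ + BV * (C₁ * σ * r)) * r := by
            refine add_le_add ?_ h6
            exact mul_le_mul h4 h5 (abs_nonneg _) (by positivity)
        _ = σ * (r * ((Real.exp Bℓ * Bℓ ^ 2 + BY) + BV * C₁ * r)) := by ring
        _ ≤ δ * (r * (K₁ + BV * C₁ * r)) := by
            rw [hK₁def]
            have hfac : 0 ≤ r * ((Real.exp Bℓ * Bℓ ^ 2 + BY) + BV * C₁ * r) := by positivity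
            have : r * (Real.exp Bℓ * Bℓ ^ 2 + BY + BV * C₁ * r)
                = r * ((Real.exp Bℓ * Bℓ ^ 2 + BY) + BV * C₁ * r) := by ring
            rw [this]
            exact mul_le_mul_of_nonneg_right hσδ hfac
    have hres := abs_intervalIntegral_le hb
    have hend : δ * (r * (K₁ + BV * C₁ * r)) * |δ - 0|
        = δ ^ 2 * (r * (K₁ + BV * C₁ * r)) := by
      rw [show δ - (0:ℝ) = δ by ring, abs_of_nonneg h0]; ring
    rw [hend] at hres
    exact hres
  -- one-step estimate
  have hstep : ∀ (y : E) (δ t : ℝ), 0 ≤ δ → δ ≤ 1 → 0 ≤ t →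
      |(∫ r in (0:ℝ)..t, ℓ (f r (h δ y))) - ∫ r in (0:ℝ)..t, ℓ (f r y)|
        ≤ C₄ * δ * t + BV * δ ^ 2 * t ^ 2 * (K₁ + BV * C₁ * t) := by
    intro y δ t h0 h1 ht
    -- inner reparametrisation derivative
    have hinner : ∀ r : ℝ, HasDerivAt (fun ρ => ρ + δ * ∫ u in (0:ℝ)..ρ, ℓ (f u y))
        (1 + δ * ℓ (f r y)) r := by
      intro r
      exact (hasDerivAt_id' r).add ((hGd y r).const_mul δ)
    have hΦd : ∀ r : ℝ, HasDerivAt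
        (fun ρ => ∫ u in (0:ℝ)..(ρ + δ * ∫ v in (0:ℝ)..ρ, ℓ (f v y)), ℓ (f u y))
        (ℓ (f (r + δ * ∫ v in (0:ℝ)..r, ℓ (f v y)) y)
          + δ * (ℓ (f (r + δ * ∫ v in (0:ℝ)..r, ℓ (f v y)) y) * ℓ (f r y))) r := by
      intro r
      have hc := (hGd y (r + δ * ∫ v in (0:ℝ)..r, ℓ (f v y))).comp r (hinner r)
      have e : ℓ (f (r + δ * ∫ v in (0:ℝ)..r, ℓ (f v y)) y) * (1 + δ * ℓ (f r y))
          = ℓ (f (r + δ * ∫ v in (0:ℝ)..r, ℓ (f v y)) y)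
            + δ * (ℓ (f (r + δ * ∫ v in (0:ℝ)..r, ℓ (f v y)) y) * ℓ (f r y)) := by ring
      rw [e] at hc
      exact hc
    have hρc : Continuous fun r : ℝ => r + δ * ∫ u in (0:ℝ)..r, ℓ (f u y) :=
      continuous_id.add (continuous_const.mul (hGc y))
    have hP2ac : Continuous fun r : ℝ => ℓ (f (r + δ * ∫ v in (0:ℝ)..r, ℓ (f v y)) y) :=
      (hgc y).comp hρc
    have hFTC2 := intervalIntegral.integral_eq_sub_of_hasDerivAt (fun r _ => hΦd r)
      ((hP2ac.add (continuous_const.mul (hP2ac.mul (hgc y)))).intervalIntegrable 0 t)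
    have hGy0 : (∫ u in (0:ℝ)..(0:ℝ), ℓ (f u y)) = 0 := intervalIntegral.integral_same
    have hΦ0 : (∫ u in (0:ℝ)..((0:ℝ) + δ * ∫ v in (0:ℝ)..(0:ℝ), ℓ (f v y)), ℓ (f u y)) = 0 := by
      rw [show (0:ℝ) + δ * ∫ v in (0:ℝ)..(0:ℝ), ℓ (f v y) = 0 by rw [hGy0]; ring]
      exact hGy0
    have hsplit : (∫ r in (0:ℝ)..t, (ℓ (f (r + δ * ∫ v in (0:ℝ)..r, ℓ (f v y)) y)
          + δ * (ℓ (f (r + δ * ∫ v in (0:ℝ)..r, ℓ (f v y)) y) * ℓ (f r y))))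
        = (∫ r in (0:ℝ)..t, ℓ (f (r + δ * ∫ v in (0:ℝ)..r, ℓ (f v y)) y))
          + δ * ∫ r in (0:ℝ)..t, (ℓ (f (r + δ * ∫ v in (0:ℝ)..r, ℓ (f v y)) y) * ℓ (f r y)) := by
      rw [intervalIntegral.integral_add
        (g := fun r => δ * (ℓ (f (r + δ * ∫ v in (0:ℝ)..r, ℓ (f v y)) y) * ℓ (f r y)))
        (hP2ac.intervalIntegrable 0 t)
        ((continuous_const.mul (hP2ac.mul (hgc y))).intervalIntegrable 0 t),
        intervalIntegral.integral_const_mul]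
    have hprod : |∫ r in (0:ℝ)..t, (ℓ (f (r + δ * ∫ v in (0:ℝ)..r, ℓ (f v y)) y) * ℓ (f r y))|
        ≤ Bℓ * Bℓ * t := by
      have hbd : ∀ u ∈ Set.uIoc (0:ℝ) t,
          |ℓ (f (u + δ * ∫ v in (0:ℝ)..u, ℓ (f v y)) y) * ℓ (f u y)| ≤ Bℓ * Bℓ := by
        intro u hu
        rw [abs_mul]
        exact mul_le_mul (hbl _) (hbl _) (abs_nonneg _) hBl
      have := abs_intervalIntegral_le hbd
      simpa [abs_of_nonneg ht] using this
    have hGbt : |∫ u in (0:ℝ)..t, ℓ (f u y)| ≤ Bℓ * t := hGb y t ht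
    have hΦtG : |(∫ u in (0:ℝ)..(t + δ * ∫ v in (0:ℝ)..t, ℓ (f v y)), ℓ (f u y))
        - ∫ u in (0:ℝ)..t, ℓ (f u y)| ≤ Bℓ * (δ * (Bℓ * t)) := by
      have h1' := hGlip y t (t + δ * ∫ v in (0:ℝ)..t, ℓ (f v y))
      have h2' : |t + (δ * ∫ v in (0:ℝ)..t, ℓ (f v y)) - t| = δ * |∫ v in (0:ℝ)..t, ℓ (f v y)| := by
        rw [show t + (δ * ∫ v in (0:ℝ)..t, ℓ (f v y)) - t = δ * ∫ v in (0:ℝ)..t, ℓ (f v y) by ring,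
          abs_mul, abs_of_nonneg h0]
      rw [h2'] at h1'
      exact le_trans h1' (mul_le_mul_of_nonneg_left (mul_le_mul_of_nonneg_left hGbt h0) hBl)
    -- the exact cancellation identity
    have hPint : |(∫ r in (0:ℝ)..t, ℓ (f (r + δ * ∫ v in (0:ℝ)..r, ℓ (f v y)) y))
        - ∫ u in (0:ℝ)..t, ℓ (f u y)| ≤ 2 * Bℓ ^ 2 * δ * t := by
      have e4 : (∫ r in (0:ℝ)..t, ℓ (f (r + δ * ∫ v in (0:ℝ)..r, ℓ (f v y)) y))
            - ∫ u in (0:ℝ)..t, ℓ (f u y)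
          = ((∫ u in (0:ℝ)..(t + δ * ∫ v in (0:ℝ)..t, ℓ (f v y)), ℓ (f u y))
              - ∫ u in (0:ℝ)..t, ℓ (f u y))
            - δ * ∫ r in (0:ℝ)..t, (ℓ (f (r + δ * ∫ v in (0:ℝ)..r, ℓ (f v y)) y) * ℓ (f r y)) := by
        have := hFTC2
        rw [hΦ0] at this
        rw [hsplit] at this
        linarith
      rw [e4]
      have h8 : |δ * ∫ r in (0:ℝ)..t, (ℓ (f (r + δ * ∫ v in (0:ℝ)..r, ℓ (f v y)) y) * ℓ (f r y))|
          ≤ δ * (Bℓ * Bℓ * t) := by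
        rw [abs_mul, abs_of_nonneg h0]
        exact mul_le_mul_of_nonneg_left hprod h0
      refine le_trans (abs_sub _ _) ?_
      have heqq : Bℓ * (δ * (Bℓ * t)) + δ * (Bℓ * Bℓ * t) = 2 * Bℓ ^ 2 * δ * t := by ring
      linarith [hΦtG, h8]
    -- pointwise comparison of the two integrands
    have hWP : ∀ r ∈ Set.uIoc (0:ℝ) t,
        |ℓ (f r (h δ y)) - ℓ (f (r + δ * ∫ v in (0:ℝ)..r, ℓ (f v y)) y)|
          ≤ BY * δ + BV * (δ ^ 2 * (t * (K₁ + BV * C₁ * t))) := by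
      intro r hr
      rw [Set.uIoc_of_le ht] at hr
      obtain ⟨hr0, hrt⟩ := hr
      rw [hcomm y δ r]
      have e5 : ℓ (h δ (f (z y δ r) y)) - ℓ (f (r + δ * ∫ v in (0:ℝ)..r, ℓ (f v y)) y)
          = (ℓ (h δ (f (z y δ r) y)) - ℓ (f (z y δ r) y))
            + (ℓ (f (z y δ r) y) - ℓ (f (r + δ * ∫ v in (0:ℝ)..r, ℓ (f v y)) y)) := by ring
      rw [e5]
      refine le_trans (abs_add_le _ _) (add_le_add ?_ ?_)
      · simpa [abs_of_nonneg h0] using hliph (f (z y δ r) y) δ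
      · calc |ℓ (f (z y δ r) y) - ℓ (f (r + δ * ∫ v in (0:ℝ)..r, ℓ (f v y)) y)|
            ≤ BV * |z y δ r - (r + δ * ∫ v in (0:ℝ)..r, ℓ (f v y))| :=
              hlipf y (r + δ * ∫ v in (0:ℝ)..r, ℓ (f v y)) (z y δ r)
          _ ≤ BV * (δ ^ 2 * (t * (K₁ + BV * C₁ * t))) := by
              have h6 := hz2 y δ r h0 h1 hr0.le
              have h7 : δ ^ 2 * (r * (K₁ + BV * C₁ * r)) ≤ δ ^ 2 * (t * (K₁ + BV * C₁ * t)) := by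
                have hδsq : 0 ≤ δ ^ 2 := sq_nonneg δ
                have hin : r * (K₁ + BV * C₁ * r) ≤ t * (K₁ + BV * C₁ * t) := by
                  nlinarith [mul_nonneg hK₁ (sub_nonneg.2 hrt),
                    mul_nonneg (mul_nonneg (mul_nonneg hBV hC₁) (sub_nonneg.2 hrt))
                      (by linarith : (0:ℝ) ≤ t + r)]
                exact mul_le_mul_of_nonneg_left hin hδsq
              have e6 : z y δ r - (r + δ * ∫ v in (0:ℝ)..r, ℓ (f v y))
                  = z y δ r - r - δ * ∫ v in (0:ℝ)..r, ℓ (f v y) := by ring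
              rw [e6]
              exact mul_le_mul_of_nonneg_left (le_trans h6 h7) hBV
    -- assemble
    have hdecomp : (∫ r in (0:ℝ)..t, ℓ (f r (h δ y))) - ∫ r in (0:ℝ)..t, ℓ (f r y)
        = (∫ r in (0:ℝ)..t, (ℓ (f r (h δ y)) - ℓ (f (r + δ * ∫ v in (0:ℝ)..r, ℓ (f v y)) y)))
          + ((∫ r in (0:ℝ)..t, ℓ (f (r + δ * ∫ v in (0:ℝ)..r, ℓ (f v y)) y))
            - ∫ r in (0:ℝ)..t, ℓ (f r y)) := by
      rw [intervalIntegral.integral_sub ((hgc (h δ y)).intervalIntegrable 0 t)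
        (hP2ac.intervalIntegrable 0 t)]
      ring
    rw [hdecomp]
    refine le_trans (abs_add_le _ _) ?_
    have hmid := abs_intervalIntegral_le hWP
    rw [show t - (0:ℝ) = t by ring, abs_of_nonneg ht] at hmid
    refine le_trans (add_le_add hmid hPint) (le_of_eq ?_)
    rw [hC₄def]
    ring
  -- telescoping: Lipschitz estimate on σ ↦ ∫₀ᵗ ℓ(f_r(h_σ x))
  have htel : ∀ (x : E) (t s : ℝ), 0 ≤ t → 0 ≤ s → s ≤ 1 →
      |(∫ r in (0:ℝ)..t, ℓ (f r (h s x))) - ∫ r in (0:ℝ)..t, ℓ (f r x)| ≤ C₄ * s * t := by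
    intro x t s ht hs0 hs1
    refine le_of_forall_pos_le_add fun ε hε => ?_
    set B : ℝ := BV * s ^ 2 * t ^ 2 * (K₁ + BV * C₁ * t) with hBdef
    have hB0 : 0 ≤ B := by positivity
    obtain ⟨N, hN⟩ := exists_nat_gt (max (B / ε) 1)
    have hN1 : (1:ℝ) ≤ (N:ℝ) := le_trans (le_max_right _ _) hN.le
    have hNpos : (0:ℝ) < (N:ℝ) := by linarith
    set δ' : ℝ := s / N with hδ'def
    have hδ0 : 0 ≤ δ' := div_nonneg hs0 hNpos.le
    have hδ1 : δ' ≤ 1 := by rw [hδ'def, div_le_one hNpos]; linarith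
    have hkey : ∀ k : ℕ, |(∫ r in (0:ℝ)..t, ℓ (f r (h (((k:ℝ) + 1) * δ') x)))
        - ∫ r in (0:ℝ)..t, ℓ (f r (h ((k:ℝ) * δ') x))|
        ≤ C₄ * δ' * t + BV * δ' ^ 2 * t ^ 2 * (K₁ + BV * C₁ * t) := by
      intro k
      have hpt : h (((k:ℝ) + 1) * δ') x = h δ' (h ((k:ℝ) * δ') x) := by
        rw [show ((k:ℝ) + 1) * δ' = δ' + (k:ℝ) * δ' by ring, hhgrp]
        rfl
      rw [hpt]
      exact hstep (h ((k:ℝ) * δ') x) δ' t hδ0 hδ1 ht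
    have hNδ : (N:ℝ) * δ' = s := by rw [hδ'def]; field_simp
    have htele : (∫ r in (0:ℝ)..t, ℓ (f r (h s x))) - ∫ r in (0:ℝ)..t, ℓ (f r x)
        = ∑ k ∈ Finset.range N, ((∫ r in (0:ℝ)..t, ℓ (f r (h (((k:ℝ) + 1) * δ') x)))
            - ∫ r in (0:ℝ)..t, ℓ (f r (h ((k:ℝ) * δ') x))) := by
      have hsum := Finset.sum_range_sub
        (fun k : ℕ => ∫ r in (0:ℝ)..t, ℓ (f r (h ((k:ℝ) * δ') x))) N
      push_cast at hsum
      rw [hNδ] at hsum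
      simp only [zero_mul, hh0] at hsum
      exact hsum.symm
    rw [htele]
    refine le_trans (Finset.abs_sum_le_sum_abs _ _) ?_
    refine le_trans (Finset.sum_le_sum fun k _ => hkey k) ?_
    rw [Finset.sum_const, Finset.card_range, nsmul_eq_mul]
    have heq : (N:ℝ) * (C₄ * δ' * t + BV * δ' ^ 2 * t ^ 2 * (K₁ + BV * C₁ * t))
        = C₄ * s * t + B / N := by
      rw [hBdef, hδ'def]
      field_simp
    rw [heq]
    have hBN : B / N ≤ ε := by
      have h9 : B / ε < N := lt_of_le_of_lt (le_max_left _ _) hN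
      rw [div_le_iff₀ hNpos]
      rw [div_lt_iff₀ hε] at h9
      nlinarith
    linarith
  -- conclusion
  refine ⟨max 1 (C₁ + C₆), le_max_left _ _, ?_⟩
  intro x t s ht hs
  obtain ⟨hs0, hs1⟩ := hs
  have hMC₁ : C₁ ≤ max 1 (C₁ + C₆) := le_trans (by linarith) (le_max_right _ _)
  have hMC₆ : C₆ ≤ max 1 (C₁ + C₆) := le_trans (by linarith) (le_max_right _ _)
  have hM0 : (0:ℝ) ≤ max 1 (C₁ + C₆) := le_trans zero_le_one (le_max_left _ _)
  constructor
  · have h1 := hA x s t hs0 hs1 ht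
    have hst : 0 ≤ s * t := mul_nonneg hs0 ht
    nlinarith
  · have e1 : z x s t - t - s * ∫ r in (0:ℝ)..t, ℓ (f r x)
        = ∫ σ in (0:ℝ)..s, (Real.exp (-∫ r in (0:ℝ)..(-σ), ℓ (h r (f t (h σ x)))) *
            (∫ r in (0:ℝ)..t, ℓ (f r (h σ x))) - ∫ r in (0:ℝ)..t, ℓ (f r x)) := by
      rw [intervalIntegral.integral_sub ((hΨc x t).intervalIntegrable 0 s)
        intervalIntegrable_const, hzFTC x s t, intervalIntegral.integral_const]
      simp [smul_eq_mul]
    rw [e1]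
    have hb2 : ∀ σ ∈ Set.uIoc (0:ℝ) s,
        |Real.exp (-∫ r in (0:ℝ)..(-σ), ℓ (h r (f t (h σ x)))) *
            (∫ r in (0:ℝ)..t, ℓ (f r (h σ x))) - ∫ r in (0:ℝ)..t, ℓ (f r x)|
          ≤ C₆ * s * t := by
      intro σ hσ
      rw [Set.uIoc_of_le hs0] at hσ
      obtain ⟨hσ0, hσs⟩ := hσ
      have hσ1 : σ ≤ 1 := le_trans hσs hs1
      have h4 : |Real.exp (-∫ r in (0:ℝ)..(-σ), ℓ (h r (f t (h σ x)))) - 1|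
          ≤ Real.exp Bℓ * Bℓ * σ := hEdiff _ σ hσ0.le hσ1
      have h5 : |∫ r in (0:ℝ)..t, ℓ (f r (h σ x))| ≤ Bℓ * t := hGb (h σ x) t ht
      have h6 := htel x t σ ht hσ0.le hσ1
      have e3 : Real.exp (-∫ r in (0:ℝ)..(-σ), ℓ (h r (f t (h σ x)))) *
            (∫ r in (0:ℝ)..t, ℓ (f r (h σ x))) - ∫ r in (0:ℝ)..t, ℓ (f r x)
          = (Real.exp (-∫ r in (0:ℝ)..(-σ), ℓ (h r (f t (h σ x)))) - 1) *
              (∫ r in (0:ℝ)..t, ℓ (f r (h σ x)))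
            + ((∫ r in (0:ℝ)..t, ℓ (f r (h σ x))) - ∫ r in (0:ℝ)..t, ℓ (f r x)) := by ring
      rw [e3]
      refine le_trans (abs_add_le _ _) ?_
      rw [abs_mul]
      have h7 : |Real.exp (-∫ r in (0:ℝ)..(-σ), ℓ (h r (f t (h σ x)))) - 1| *
            |∫ r in (0:ℝ)..t, ℓ (f r (h σ x))|
          ≤ (Real.exp Bℓ * Bℓ * σ) * (Bℓ * t) :=
        mul_le_mul h4 h5 (abs_nonneg _) (by positivity)
      have heq2 : (Real.exp Bℓ * Bℓ * σ) * (Bℓ * t) + C₄ * σ * t = σ * t * C₆ := by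
        rw [hC₆def]; ring
      have hle : σ * t * C₆ ≤ C₆ * s * t := by
        nlinarith [mul_nonneg (mul_nonneg (sub_nonneg.2 hσs) ht) hC₆]
      linarith
    refine le_trans (abs_intervalIntegral_le hb2) ?_
    rw [show s - (0:ℝ) = s by ring, abs_of_nonneg hs0]
    have h10 : 0 ≤ s ^ 2 * t := by positivity
    have h11 : 0 ≤ s ^ 3 * t ^ 2 := by positivity
    nlinarith
end

section
/- Property Par(k) implies k-mixing: Let (f_t) be a measure-preserving flow on (X, μ) that is mixing of order k−1 and satisfies property Par(k): for all Lipschitz φ₀, …, φ_{k−1} with at least one μ(φ_j) = 0 and every ε > 0, there exist t_ε, H_ε ≥ 1 such that |∫_T ∏_{i=0}^{k−1} φ_i ∘ f_{t_i} dμ| ≤ ε for all k-tuples of times t with Δt ≥ t_ε and all towers T of height ≥ H_ε. Then (f_t) is mixing of order k. -/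
open MeasureTheory Set
open scoped NNReal

/-- A tower for a flow `f`: the union of the images `f t '' B` for `t ∈ [0, h]`,
with pairwise disjoint levels. -/
def IsTower {Y : Type*} (f : ℝ → Y → Y) (B : Set Y) (h : ℝ) (T : Set Y) : Prop :=
  0 ≤ h ∧ T = ⋃ t ∈ Set.Icc (0:ℝ) h, f t '' B ∧
    ∀ t ∈ Set.Icc (0:ℝ) h, ∀ t' ∈ Set.Icc (0:ℝ) h, t ≠ t' →
      Disjoint (f t '' B) (f t' '' B)

/-- `t : Fin k → ℝ` is a `k`-tuple of times with all consecutive gaps at least `T₀`: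
`t` is strictly increasing, starts at `0`, and `t_{i+1} - t_i ≥ T₀`. -/
def IsKTupleWithGap (k : ℕ) (t : Fin k → ℝ) (T₀ : ℝ) : Prop :=
  StrictMono t ∧ (∀ hk : 0 < k, t ⟨0, hk⟩ = 0) ∧
    ∀ i : ℕ, (hi : i + 1 < k) → T₀ ≤ t ⟨i + 1, hi⟩ - t ⟨i, Nat.lt_of_succ_lt hi⟩

/-- The flow `f` is mixing of order `k`: multiple correlations of compactly
supported Lipschitz functions converge to the product of the means as the minimal
gap of the tuple of times tends to infinity. -/
def MixingOfOrder {X : Type*} [MetricSpace X] [MeasurableSpace X]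
    (μ : Measure X) (f : ℝ → X → X) (k : ℕ) : Prop :=
  ∀ φ : Fin k → X → ℝ,
    (∀ i, ∃ K : ℝ≥0, LipschitzWith K (φ i)) → (∀ i, HasCompactSupport (φ i)) →
    ∀ ε > (0:ℝ), ∃ T₀ : ℝ, ∀ t : Fin k → ℝ, IsKTupleWithGap k t T₀ →
      |(∫ x, ∏ i, φ i (f (t i) x) ∂μ) - ∏ i, ∫ x, φ i x ∂μ| ≤ ε

/-
The last factor of a correlation splits as `φ_{k-1} = (φ_{k-1} - μ(φ_{k-1})) + μ(φ_{k-1})`.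
The constant part gives `μ(φ_{k-1})` times a correlation of order `k-1`, which mixing of
order `k-1` controls. The centered part has a factor of mean zero, so by Par(k) its
correlation is small on any sufficiently high tower; since the integrand is bounded and
Rokhlin towers of any height fill all of `X` up to arbitrarily small measure, it is then
small on all of `X`.
-/

theorem mul_div_two_mul_add_one_le {a ε : ℝ} (ha : 0 ≤ a) (hε : 0 ≤ ε) :
    a * (ε / (2 * (a + 1))) ≤ ε / 2 := by
  calc a * (ε / (2 * (a + 1))) ≤ (a + 1) * (ε / (2 * (a + 1))) := by gcongr; linarith
    _ = ε / 2 := by field_simp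

theorem exists_nonneg_abs_prod_le {X ι : Type*} [Fintype ι] {u : ι → X → ℝ}
    (hu : ∀ i, ∃ C, ∀ x, |u i x| ≤ C) :
    ∃ C, 0 ≤ C ∧ ∀ y : ι → X, |∏ i, u i (y i)| ≤ C := by
  choose C hC using hu
  refine ⟨∏ i, max (C i) 0, Finset.prod_nonneg fun i _ => le_max_right _ _, fun y => ?_⟩
  rw [Finset.abs_prod]
  exact Finset.prod_le_prod (fun i _ => abs_nonneg _)
    fun i _ => (hC i (y i)).trans (le_max_left _ _)

section Correlations

variable {X : Type*} [MeasurableSpace X] {μ : Measure X}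

theorem IsKTupleWithGap.mono {k : ℕ} {t : Fin k → ℝ} {T₀ T₁ : ℝ}
    (ht : IsKTupleWithGap k t T₁) (hT : T₀ ≤ T₁) : IsKTupleWithGap k t T₀ :=
  ⟨ht.1, ht.2.1, fun i hi => hT.trans (ht.2.2 i hi)⟩

theorem IsKTupleWithGap.init {n : ℕ} {t : Fin (n + 1) → ℝ} {T₀ : ℝ}
    (ht : IsKTupleWithGap (n + 1) t T₀) : IsKTupleWithGap n (Fin.init t) T₀ :=
  ⟨ht.1.comp Fin.strictMono_castSucc, fun _ => ht.2.1 n.succ_pos,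
    fun i hi => ht.2.2 i (by omega)⟩

theorem integrable_prod_comp [IsFiniteMeasure μ] {ι : Type*} [Fintype ι] {u : ι → X → ℝ}
    (hum : ∀ i, Measurable (u i)) (hub : ∀ i, ∃ C, ∀ x, |u i x| ≤ C) {g : ι → X → X}
    (hg : ∀ i, Measurable (g i)) : Integrable (fun x => ∏ i, u i (g i x)) μ := by
  obtain ⟨C, -, hC⟩ := exists_nonneg_abs_prod_le hub
  exact .of_bound (Finset.measurable_prod _ fun i _ => (hum i).comp (hg i)).aestronglyMeasurable
    C (.of_forall fun x => hC fun i => g i x)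

theorem abs_integral_sub_setIntegral_le [IsFiniteMeasure μ] {g : X → ℝ} (hg : Integrable g μ)
    {C : ℝ} (hC0 : 0 ≤ C) (hC : ∀ x, |g x| ≤ C) (T : Set X) :
    |∫ x, g x ∂μ - ∫ x in T, g x ∂μ| ≤ μ.real Tᶜ * C := by
  rw [← Measure.restrict_toMeasurable (measure_ne_top μ T)]
  calc |∫ x, g x ∂μ - ∫ x in toMeasurable μ T, g x ∂μ|
      ≤ μ.real (toMeasurable μ T)ᶜ * C :=
        norm_integral_sub_setIntegral_le (.of_forall hC) (measurableSet_toMeasurable μ T) hg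
    _ ≤ μ.real Tᶜ * C := by
        gcongr
        exacts [measure_ne_top μ _, subset_toMeasurable μ T]

theorem exists_gap_abs_integral_prod_le_of_towers [IsFiniteMeasure μ] {f : ℝ → X → X}
    (hf : ∀ t, Measurable (f t))
    (hRokhlin : ∀ ε > (0:ℝ), ∀ H : ℝ, ∃ (B T : Set X) (h : ℝ), IsTower f B h T ∧
      H ≤ h ∧ μ Tᶜ ≤ ENNReal.ofReal ε)
    {k : ℕ} {ψ : Fin k → X → ℝ} (hψm : ∀ i, Measurable (ψ i))
    (hψb : ∀ i, ∃ C, ∀ x, |ψ i x| ≤ C)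
    (hψT : ∀ ε > (0:ℝ), ∃ tε Hε : ℝ, ∀ t : Fin k → ℝ, IsKTupleWithGap k t tε →
      ∀ (B T : Set X) (h : ℝ), IsTower f B h T → Hε ≤ h →
        |∫ x in T, ∏ i, ψ i (f (t i) x) ∂μ| ≤ ε) :
    ∀ ε > (0:ℝ), ∃ T₀ : ℝ, ∀ t : Fin k → ℝ, IsKTupleWithGap k t T₀ →
      |∫ x, ∏ i, ψ i (f (t i) x) ∂μ| ≤ ε := by
  intro ε hε
  obtain ⟨C, hC0, hC⟩ := exists_nonneg_abs_prod_le hψb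
  set δ := ε / (2 * (C + 1))
  have hδ : 0 < δ := by positivity
  have hδC : δ * C ≤ ε / 2 := mul_comm C δ ▸ mul_div_two_mul_add_one_le hC0 hε.le
  obtain ⟨tε, Hε, hsmall⟩ := hψT (ε / 2) (by positivity)
  obtain ⟨B, T, h, hT, hHh, hTc⟩ := hRokhlin δ hδ Hε
  have hTcδ : μ.real Tᶜ ≤ δ := ENNReal.toReal_le_of_le_ofReal hδ.le hTc
  refine ⟨tε, fun t ht => ?_⟩
  have hoff := abs_integral_sub_setIntegral_le (μ := μ)
    (integrable_prod_comp hψm hψb fun i => hf (t i)) hC0 (fun x => hC fun i => f (t i) x) T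
  have hon := hsmall t ht B T h hT hHh
  calc |∫ x, ∏ i, ψ i (f (t i) x) ∂μ|
      ≤ |∫ x, ∏ i, ψ i (f (t i) x) ∂μ - ∫ x in T, ∏ i, ψ i (f (t i) x) ∂μ|
        + |∫ x in T, ∏ i, ψ i (f (t i) x) ∂μ| :=
        sub_le_iff_le_add.mp (abs_sub_abs_le_abs_sub _ _)
    _ ≤ δ * C + ε / 2 := by gcongr; exact hoff.trans (by gcongr)
    _ ≤ ε := by linarith

noncomputable def centerLast (μ : Measure X) {n : ℕ} (φ : Fin (n + 1) → X → ℝ) :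
    Fin (n + 1) → X → ℝ :=
  Function.update φ (Fin.last n) fun x => φ (Fin.last n) x - ∫ x, φ (Fin.last n) x ∂μ

theorem exists_lipschitzWith_centerLast [PseudoEMetricSpace X] {n : ℕ}
    {φ : Fin (n + 1) → X → ℝ} (hφ : ∀ i, ∃ K : ℝ≥0, LipschitzWith K (φ i)) :
    ∀ i, ∃ K : ℝ≥0, LipschitzWith K (centerLast μ φ i) :=
  (Function.forall_update_iff φ fun _ g => ∃ K : ℝ≥0, LipschitzWith K g).2
    ⟨(hφ _).elim fun K hK => ⟨K + 0, hK.sub (.const _)⟩, fun i _ => hφ i⟩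

theorem exists_abs_centerLast_le {n : ℕ} {φ : Fin (n + 1) → X → ℝ}
    (hφ : ∀ i, ∃ C, ∀ x, |φ i x| ≤ C) :
    ∀ i, ∃ C, ∀ x, |centerLast μ φ i x| ≤ C :=
  (Function.forall_update_iff φ fun _ g => ∃ C, ∀ x, |g x| ≤ C).2
    ⟨(hφ _).elim fun C hC => ⟨C + |∫ x, φ (Fin.last n) x ∂μ|,
      fun x => (abs_sub _ _).trans (by gcongr; exact hC x)⟩, fun i _ => hφ i⟩

theorem integral_centerLast_last [IsProbabilityMeasure μ] {n : ℕ}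
    {φ : Fin (n + 1) → X → ℝ} (hφ : Integrable (φ (Fin.last n)) μ) :
    ∫ x, centerLast μ φ (Fin.last n) x ∂μ = 0 := by
  simp [centerLast, integral_sub hφ (integrable_const _)]

theorem prod_eq_prod_centerLast_add {n : ℕ} (φ : Fin (n + 1) → X → ℝ)
    (y : Fin (n + 1) → X) :
    ∏ i, φ i (y i) = ∏ i, centerLast μ φ i (y i)
      + (∫ x, φ (Fin.last n) x ∂μ) * ∏ j, Fin.init φ j (Fin.init y j) := by
  simp [centerLast, Fin.prod_univ_castSucc, Fin.init]
  ring

theorem integral_prod_sub_prod_integral_eq {n : ℕ} (φ : Fin (n + 1) → X → ℝ)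
    (g : Fin (n + 1) → X → X)
    (hcentered : Integrable (fun x => ∏ i, centerLast μ φ i (g i x)) μ)
    (hinit : Integrable (fun x => ∏ j, Fin.init φ j (Fin.init g j x)) μ) :
    ∫ x, ∏ i, φ i (g i x) ∂μ - ∏ i, ∫ x, φ i x ∂μ
      = ∫ x, ∏ i, centerLast μ φ i (g i x) ∂μ
        + (∫ x, φ (Fin.last n) x ∂μ) * (∫ x, ∏ j, Fin.init φ j (Fin.init g j x) ∂μ
          - ∏ j, ∫ x, Fin.init φ j x ∂μ) := by
  have hsplit := funext fun x => prod_eq_prod_centerLast_add (μ := μ) φ fun i => g i x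
  simp only [Fin.init] at hinit hsplit ⊢
  rw [hsplit, integral_add hcentered (hinit.const_mul _), integral_const_mul,
    Fin.prod_univ_castSucc fun i => ∫ x, φ i x ∂μ]
  ring

end Correlations

theorem mixing_of_order_of_park_general
    {X : Type*} [MetricSpace X] [MeasurableSpace X] [BorelSpace X]
    (μ : Measure X) [IsProbabilityMeasure μ]
    (f : ℝ → X → X)
    (hmp : ∀ t, MeasurePreserving (f t) μ μ)
    (k : ℕ) (hk : 2 ≤ k)
    -- Rokhlin towers of arbitrary height with measure arbitrarily close to 1 exist:
    (hRokhlin : ∀ ε > (0:ℝ), ∀ H : ℝ, ∃ (B T : Set X) (h : ℝ), IsTower f B h T ∧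
      H ≤ h ∧ μ Tᶜ ≤ ENNReal.ofReal ε)
    -- mixing of order k-1:
    (hmix : MixingOfOrder μ f (k - 1))
    -- property Par(k):
    (hPar : ∀ φ : Fin k → X → ℝ,
      (∀ i, ∃ K : ℝ≥0, LipschitzWith K (φ i)) →
      (∀ i, ∃ C, ∀ x, |φ i x| ≤ C) →
      (∃ j, ∫ x, φ j x ∂μ = 0) →
      ∀ ε > (0:ℝ), ∃ tε Hε : ℝ, 1 ≤ tε ∧ 1 ≤ Hε ∧
        ∀ t : Fin k → ℝ, IsKTupleWithGap k t tε →
          ∀ (B T : Set X) (h : ℝ), IsTower f B h T → Hε ≤ h →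
            |∫ x in T, ∏ i, φ i (f (t i) x) ∂μ| ≤ ε) :
    MixingOfOrder μ f k := by
  obtain ⟨n, rfl⟩ : ∃ n, k = n + 1 := ⟨k - 1, by omega⟩
  intro φ hLip hsupp ε hε
  have hf : ∀ t, Measurable (f t) := fun t => (hmp t).measurable
  have hφc : ∀ i, Continuous (φ i) := fun i => (hLip i).choose_spec.continuous
  have hφb : ∀ i, ∃ C, ∀ x, |φ i x| ≤ C := fun i =>
    (hsupp i).exists_bound_of_continuous (hφc i)
  have hψLip := exists_lipschitzWith_centerLast (μ := μ) hLip
  have hψb := exists_abs_centerLast_le (μ := μ) hφb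
  have hψm : ∀ i, Measurable (centerLast μ φ i) := fun i =>
    (hψLip i).choose_spec.continuous.measurable
  have hψmean := integral_centerLast_last (μ := μ)
    ((hφc (Fin.last n)).integrable_of_hasCompactSupport (hsupp _))
  obtain ⟨T₁, hcentered⟩ := exists_gap_abs_integral_prod_le_of_towers hf hRokhlin hψm hψb
    (fun δ hδ => (hPar _ hψLip hψb ⟨_, hψmean⟩ δ hδ).imp fun _ => .imp fun _ h => h.2.2)
    (ε / 2) (by positivity)
  set c := ∫ x, φ (Fin.last n) x ∂μ
  obtain ⟨T₂, hinit⟩ := (hmix : MixingOfOrder μ f n) (Fin.init φ) (fun _ => hLip _)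
    (fun _ => hsupp _) (ε / (2 * (|c| + 1))) (by positivity)
  refine ⟨max T₁ T₂, fun t ht => ?_⟩
  rw [integral_prod_sub_prod_integral_eq φ (fun i => f (t i))
    (integrable_prod_comp hψm hψb fun _ => hf _)
    (integrable_prod_comp (fun _ => (hφc _).measurable) (fun _ => hφb _) fun _ => hf _)]
  calc _ ≤ |∫ x, ∏ i, centerLast μ φ i (f (t i) x) ∂μ| + |c| * |∫ x, ∏ j,
        Fin.init φ j (f (Fin.init t j) x) ∂μ - ∏ j, ∫ x, Fin.init φ j x ∂μ| := by
        rw [← abs_mul]; exact abs_add_le _ _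
    _ ≤ ε / 2 + |c| * (ε / (2 * (|c| + 1))) := by
        gcongr
        exacts [hcentered t (ht.mono (le_max_left _ _)), hinit _ (ht.init.mono (le_max_right _ _))]
    _ ≤ ε := by linarith [mul_div_two_mul_add_one_le (abs_nonneg c) hε.le]

/-- Property Par(k) together with mixing of order `k-1` implies mixing of order `k`. -/
theorem mixing_of_order_of_park
    {X : Type*} [MetricSpace X] [MeasurableSpace X] [BorelSpace X]
    (μ : Measure X) [IsProbabilityMeasure μ]
    (f : ℝ → X → X) (hf0 : f 0 = id) (hfadd : ∀ s t, f (s + t) = f s ∘ f t)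
    (hmp : ∀ t, MeasurePreserving (f t) μ μ)
    (k : ℕ) (hk : 2 ≤ k)
    -- Rokhlin towers of arbitrary height with measure arbitrarily close to 1 exist:
    (hRokhlin : ∀ ε > (0:ℝ), ∀ H : ℝ, ∃ (B T : Set X) (h : ℝ), IsTower f B h T ∧
      H ≤ h ∧ μ Tᶜ ≤ ENNReal.ofReal ε)
    -- mixing of order k-1:
    (hmix : MixingOfOrder μ f (k - 1))
    -- property Par(k):
    (hPar : ∀ φ : Fin k → X → ℝ,
      (∀ i, ∃ K : ℝ≥0, LipschitzWith K (φ i)) →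
      (∀ i, ∃ C, ∀ x, |φ i x| ≤ C) →
      (∃ j, ∫ x, φ j x ∂μ = 0) →
      ∀ ε > (0:ℝ), ∃ tε Hε : ℝ, 1 ≤ tε ∧ 1 ≤ Hε ∧
        ∀ t : Fin k → ℝ, IsKTupleWithGap k t tε →
          ∀ (B T : Set X) (h : ℝ), IsTower f B h T → Hε ≤ h →
            |∫ x in T, ∏ i, φ i (f (t i) x) ∂μ| ≤ ε) :
    MixingOfOrder μ f k :=
  mixing_of_order_of_park_general μ f hmp k hk hRokhlin hmix hPar
end
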